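/- arXiv:2508.05386 — 10 statements merged into one kernel-verified Lean document; each statement's English description precedes it below -/
import Mathlib

section
/- Let p be a real number with 0 ≤ p ≤ 1. Suppose there exist integers a, b and a natural number k such that √p = (a + b·√2)/2^k, and there exist integers c, d and a natural number ℓ such that √(1−p) = (c + d·√2)/2^ℓ. Then p ∈ {0, 1/2, 1}. -/
lemma two_dvd_of_zmod {n : ℕ} [NeZero n] (hn : (2:ℕ) ∣ n) {a : ℤ}
    (h : (2 : ZMod n) ∣ ((a : ZMod n))) : (2:ℤ) ∣ a := by
  obtain ⟨x, hx⟩ := h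
  have h2 := congrArg (ZMod.castHom hn (ZMod 2)) hx
  rw [map_mul, map_intCast, map_ofNat] at h2
  have h20 : (2 : ZMod 2) = 0 := rfl
  rw [h20, zero_mul] at h2
  exact (ZMod.intCast_zmod_eq_zero_iff_dvd a 2).mp h2

lemma zmod4_key : ∀ z w : ZMod 4, z^2 + 2*w^2 = 0 →
    (z = 0 ∨ z = 2) ∧ (w = 0 ∨ w = 2) := by decide

lemma zmod8_key : ∀ x y z w : ZMod 8, x^2+2*y^2+z^2+2*w^2 = 0 → x*y+z*w = 0 →
    ((x = 0 ∨ x = 2 ∨ x = 4 ∨ x = 6) ∧ (y = 0 ∨ y = 2 ∨ y = 4 ∨ y = 6)) ∨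
    ((z = 0 ∨ z = 2 ∨ z = 4 ∨ z = 6) ∧ (w = 0 ∨ w = 2 ∨ w = 4 ∨ w = 6)) := by decide

lemma dvd4_of_cases {x : ZMod 4} (h : x = 0 ∨ x = 2) : (2:ZMod 4) ∣ x := by
  rcases h with rfl | rfl
  · exact ⟨0, by decide⟩
  · exact ⟨1, by decide⟩

lemma dvd8_of_cases {x : ZMod 8} (h : x = 0 ∨ x = 2 ∨ x = 4 ∨ x = 6) : (2:ZMod 8) ∣ x := by
  rcases h with rfl | rfl | rfl | rfl
  · exact ⟨0, by decide⟩
  · exact ⟨1, by decide⟩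
  · exact ⟨2, by decide⟩
  · exact ⟨3, by decide⟩

lemma eq_of_le_rep (a b c d : ℤ) (k l : ℕ) (hl1 : 1 ≤ l)
    (hlred : ¬((2:ℤ) ∣ c ∧ (2:ℤ) ∣ d)) (hkl : k ≤ l)
    (hS : (a^2+2*b^2)*4^l + (c^2+2*d^2)*4^k = 4^(k+l)) : k = l := by
  by_contra hne
  obtain ⟨m, rfl, hm1⟩ : ∃ m, l = k + m ∧ 1 ≤ m := ⟨l - k, by omega, by omega⟩
  have h4 : ((4:ℤ)^k) ≠ 0 := by positivity
  have key : (a^2+2*b^2) * 4^m + (c^2+2*d^2) = 4^(k+m) := by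
    apply mul_left_cancel₀ h4
    linear_combination hS
  have hdvd : (4:ℤ) ∣ c^2+2*d^2 := by
    have heq : c^2+2*d^2 = 4^(k+m) - (a^2+2*b^2) * 4^m := by linarith
    rw [heq]
    exact dvd_sub (dvd_pow_self 4 (by omega)) ((dvd_pow_self 4 (by omega)).mul_left _)
  have hcz : ((c:ZMod 4)^2 + 2*(d:ZMod 4)^2) = 0 := by
    have h0 : ((c^2+2*d^2 : ℤ) : ZMod 4) = 0 := by
      rw [ZMod.intCast_zmod_eq_zero_iff_dvd]
      exact_mod_cast hdvd
    push_cast at h0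
    exact h0
  obtain ⟨hc1, hd1⟩ := zmod4_key _ _ hcz
  exact hlred ⟨two_dvd_of_zmod (by norm_num) (dvd4_of_cases hc1),
    two_dvd_of_zmod (by norm_num) (dvd4_of_cases hd1)⟩

lemma key_int (a b c d : ℤ) (k l : ℕ)
    (hk : k = 0 ∨ ¬((2:ℤ) ∣ a ∧ (2:ℤ) ∣ b))
    (hl : l = 0 ∨ ¬((2:ℤ) ∣ c ∧ (2:ℤ) ∣ d))
    (hS : (a^2+2*b^2)*4^l + (c^2+2*d^2)*4^k = 4^(k+l))
    (hT : (2*a*b)*4^l + (2*c*d)*4^k = 0) :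
    (a = 0 ∧ b = 0) ∨ (k = 0 ∧ b = 0 ∧ a^2 = 1) ∨ (c = 0 ∧ d = 0) ∨
      (l = 0 ∧ d = 0 ∧ c^2 = 1) ∨ (k = 1 ∧ a = 0 ∧ b^2 = 1) := by
  have h4l : (0:ℤ) < 4^l := by positivity
  have h4k : (0:ℤ) < 4^k := by positivity
  rcases Nat.eq_zero_or_pos k with hk0 | hkpos
  · subst hk0
    have hS' : (a^2+2*b^2)*4^l + (c^2+2*d^2) = 4^l := by simpa using hS
    have hA1 : a^2+2*b^2 ≤ 1 := by nlinarith [sq_nonneg c, sq_nonneg d]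
    have hb2 : b^2 = 0 := by nlinarith [sq_nonneg a, sq_nonneg b]
    have hb : b = 0 := by nlinarith [sq_nonneg b]
    have ha2 : a^2 = 0 ∨ a^2 = 1 := by
      have h1 : 0 ≤ a^2 := sq_nonneg a
      omega
    rcases ha2 with ha2 | ha2
    · exact Or.inl ⟨pow_eq_zero_iff (n := 2) (by norm_num) |>.mp ha2, hb⟩
    · exact Or.inr (Or.inl ⟨rfl, hb, ha2⟩)
  rcases Nat.eq_zero_or_pos l with hl0 | hlpos
  · subst hl0
    have hS' : (a^2+2*b^2) + (c^2+2*d^2)*4^k = 4^k := by simpa using hS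
    have hC1 : c^2+2*d^2 ≤ 1 := by nlinarith [sq_nonneg a, sq_nonneg b]
    have hd2 : d^2 = 0 := by nlinarith [sq_nonneg c, sq_nonneg d]
    have hd : d = 0 := by nlinarith [sq_nonneg d]
    have hc2 : c^2 = 0 ∨ c^2 = 1 := by
      have h1 : 0 ≤ c^2 := sq_nonneg c
      omega
    rcases hc2 with hc2 | hc2
    · exact Or.inr (Or.inr (Or.inl ⟨pow_eq_zero_iff (n := 2) (by norm_num) |>.mp hc2, hd⟩))
    · exact Or.inr (Or.inr (Or.inr (Or.inl ⟨rfl, hd, hc2⟩)))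
  have hk' := hk.resolve_left (by omega)
  have hl' := hl.resolve_left (by omega)
  have hkl : k = l := by
    rcases le_total k l with h | h
    · exact eq_of_le_rep a b c d k l hlpos hl' h hS
    · refine (eq_of_le_rep c d a b l k hkpos hk' h ?_).symm
      rw [Nat.add_comm]
      linarith
  subst hkl
  have h4 : ((4:ℤ)^k) ≠ 0 := ne_of_gt h4k
  have hAC : a^2+2*b^2+c^2+2*d^2 = 4^k := by
    have := mul_right_cancel₀ h4 (show (a^2+2*b^2+c^2+2*d^2) * 4^k = 4^k * 4^k by
      linear_combination hS)
    linarith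
  have hab : a*b + c*d = 0 := by
    have h2 : (2:ℤ) * ((a*b + c*d) * 4^k) = 0 := by linear_combination hT
    have h3 : (a*b + c*d) * 4^k = 0 := by linarith
    rcases mul_eq_zero.mp h3 with h | h
    · exact h
    · exact absurd h h4
  rcases Nat.lt_or_ge k 2 with hk2 | hk2
  · have hk1 : k = 1 := by omega
    subst hk1
    norm_num at hAC
    refine Or.inr (Or.inr (Or.inr (Or.inr ⟨rfl, ?_⟩)))
    have ha : -2 ≤ a ∧ a ≤ 2 := ⟨by nlinarith [sq_nonneg b, sq_nonneg c, sq_nonneg d],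
      by nlinarith [sq_nonneg b, sq_nonneg c, sq_nonneg d]⟩
    have hb : -1 ≤ b ∧ b ≤ 1 := ⟨by nlinarith [sq_nonneg a, sq_nonneg c, sq_nonneg d],
      by nlinarith [sq_nonneg a, sq_nonneg c, sq_nonneg d]⟩
    have hc : -2 ≤ c ∧ c ≤ 2 := ⟨by nlinarith [sq_nonneg b, sq_nonneg a, sq_nonneg d],
      by nlinarith [sq_nonneg b, sq_nonneg a, sq_nonneg d]⟩
    have hd : -1 ≤ d ∧ d ≤ 1 := ⟨by nlinarith [sq_nonneg a, sq_nonneg c, sq_nonneg b],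
      by nlinarith [sq_nonneg a, sq_nonneg c, sq_nonneg b]⟩
    obtain ⟨ha1, ha2⟩ := ha; obtain ⟨hb1, hb2⟩ := hb
    obtain ⟨hc1, hc2⟩ := hc; obtain ⟨hd1, hd2⟩ := hd
    interval_cases a <;> interval_cases b <;> interval_cases c <;> interval_cases d <;>
      omega
  · exfalso
    have h8dvd : (8:ℤ) ∣ (a^2+2*b^2+c^2+2*d^2) := by
      rw [hAC, show k = 2 + (k-2) by omega, pow_add]
      exact ⟨2 * 4^(k-2), by ring⟩
    have hcast : ((a:ZMod 8)^2 + 2*(b:ZMod 8)^2 + (c:ZMod 8)^2 + 2*(d:ZMod 8)^2) = 0 := by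
      have hz : ((a^2+2*b^2+c^2+2*d^2 : ℤ) : ZMod 8) = 0 := by
        rw [ZMod.intCast_zmod_eq_zero_iff_dvd]
        exact_mod_cast h8dvd
      push_cast at hz
      exact hz
    have hcast2 : (a:ZMod 8)*(b:ZMod 8) + (c:ZMod 8)*(d:ZMod 8) = 0 := by
      have hz : ((a*b + c*d : ℤ) : ZMod 8) = 0 := by rw [hab]; simp
      push_cast at hz
      exact hz
    rcases zmod8_key _ _ _ _ hcast hcast2 with ⟨h1, h2⟩ | ⟨h1, h2⟩
    · exact hk' ⟨two_dvd_of_zmod (by norm_num) (dvd8_of_cases h1),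
        two_dvd_of_zmod (by norm_num) (dvd8_of_cases h2)⟩
    · exact hl' ⟨two_dvd_of_zmod (by norm_num) (dvd8_of_cases h1),
        two_dvd_of_zmod (by norm_num) (dvd8_of_cases h2)⟩

lemma reduce_rep (x : ℝ) : ∀ (k : ℕ) (a b : ℤ),
    Real.sqrt x = ((a:ℝ) + (b:ℝ) * Real.sqrt 2) / 2 ^ k →
    ∃ (a' b' : ℤ) (k' : ℕ), Real.sqrt x = ((a':ℝ) + (b':ℝ) * Real.sqrt 2) / 2 ^ k' ∧
      (k' = 0 ∨ ¬((2:ℤ) ∣ a' ∧ (2:ℤ) ∣ b')) := by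
  intro k
  induction k with
  | zero => exact fun a b h => ⟨a, b, 0, h, Or.inl rfl⟩
  | succ n ih =>
    intro a b h
    by_cases hab : (2:ℤ) ∣ a ∧ (2:ℤ) ∣ b
    · obtain ⟨⟨a', rfl⟩, ⟨b', rfl⟩⟩ := hab
      apply ih a' b'
      rw [h]
      push_cast
      have h2 : ((2:ℝ))^(n+1) = 2 * 2^n := by ring
      rw [h2]
      field_simp
    · exact ⟨a, b, n+1, h, Or.inr hab⟩

lemma sq_expand_rep (p : ℝ) (h0 : 0 ≤ p) (a b : ℤ) (k : ℕ)
    (ha : Real.sqrt p = ((a:ℝ) + (b:ℝ) * Real.sqrt 2) / 2 ^ k) :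
    p * 4^k = ((a:ℝ)^2 + 2*(b:ℝ)^2) + (2*(a:ℝ)*(b:ℝ)) * Real.sqrt 2 := by
  have s2 : Real.sqrt 2 ^ 2 = 2 := Real.sq_sqrt (by norm_num)
  have h := Real.sq_sqrt h0
  rw [ha, div_pow] at h
  have hne : ((2:ℝ)^k)^2 ≠ 0 := by positivity
  have hthis : ((a:ℝ) + b*Real.sqrt 2)^2 = p * ((2:ℝ)^k)^2 := by
    field_simp at h
    linarith
  have h2k : ((2:ℝ)^k)^2 = 4^k := by
    rw [← pow_mul, mul_comm, pow_mul]
    norm_num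
  rw [← h2k]
  linear_combination (-1) * hthis + (b:ℝ)^2 * s2

/-- If `0 ≤ p ≤ 1` and both `√p` and `√(1-p)` lie in the ring
`ℤ[1/√2]` (i.e. can be written as `(a + b√2)/2^k` with `a b : ℤ`, `k : ℕ`),
then `p ∈ {0, 1/2, 1}`. -/
theorem sqrt_in_Z_inv_sqrt2_forces_p
    (p : ℝ) (h0 : 0 ≤ p) (h1 : p ≤ 1)
    (hp : ∃ (a b : ℤ) (k : ℕ),
      Real.sqrt p = ((a : ℝ) + (b : ℝ) * Real.sqrt 2) / 2 ^ k)
    (hq : ∃ (c d : ℤ) (l : ℕ),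
      Real.sqrt (1 - p) = ((c : ℝ) + (d : ℝ) * Real.sqrt 2) / 2 ^ l) :
    p = 0 ∨ p = 1 / 2 ∨ p = 1 := by
  obtain ⟨a0, b0, k0, ha0⟩ := hp
  obtain ⟨c0, d0, l0, hc0⟩ := hq
  obtain ⟨a, b, k, ha, hared⟩ := reduce_rep p k0 a0 b0 ha0
  obtain ⟨c, d, l, hc, hcred⟩ := reduce_rep (1-p) l0 c0 d0 hc0
  have h0' : (0:ℝ) ≤ 1 - p := by linarith
  have hp2 := sq_expand_rep p h0 a b k ha
  have hq2 := sq_expand_rep (1-p) h0' c d l hc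
  set S : ℤ := (a^2+2*b^2)*4^l + (c^2+2*d^2)*4^k with hSdef
  set T : ℤ := (2*a*b)*4^l + (2*c*d)*4^k with hTdef
  have hsum : ((4^(k+l) : ℤ) : ℝ) = (S:ℝ) + (T:ℝ) * Real.sqrt 2 := by
    rw [hSdef, hTdef]
    push_cast
    rw [pow_add]
    linear_combination (4:ℝ)^l * hp2 + (4:ℝ)^k * hq2
  push_cast at hsum
  have hT : T = 0 := by
    by_contra hTne
    have hTne' : ((T:ℝ)) ≠ 0 := Int.cast_ne_zero.mpr hTne
    have hs : Real.sqrt 2 = ((4:ℝ)^(k+l) - (S:ℝ)) / (T:ℝ) := by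
      field_simp
      linarith [hsum]
    exact irrational_sqrt_two ⟨((4:ℚ)^(k+l) - (S:ℚ)) / ((T:ℤ) : ℚ), by
      push_cast
      rw [hs]⟩
  have hS : S = 4^(k+l) := by
    rw [hT] at hsum
    norm_num at hsum
    exact_mod_cast hsum.symm
  have h4kpos : (0:ℝ) < 4^k := by positivity
  have h4lpos : (0:ℝ) < 4^l := by positivity
  rcases key_int a b c d k l hared hcred hS hT with
    ⟨rfl, rfl⟩ | ⟨rfl, rfl, ha2⟩ | ⟨rfl, rfl⟩ | ⟨rfl, rfl, hc2⟩ | ⟨rfl, rfl, hb2⟩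
  · -- a = 0, b = 0 : p = 0
    left
    norm_num at hp2
    linarith
  · -- k = 0, b = 0, a^2 = 1 : p = 1
    right; right
    have haR : ((a:ℝ))^2 = 1 := by exact_mod_cast congrArg (Int.cast : ℤ → ℝ) ha2
    norm_num at hp2
    linarith
  · -- c = 0, d = 0 : 1 - p = 0
    right; right
    norm_num at hq2
    linarith
  · -- l = 0, d = 0, c^2 = 1 : 1 - p = 1
    left
    have hcR : ((c:ℝ))^2 = 1 := by exact_mod_cast congrArg (Int.cast : ℤ → ℝ) hc2
    norm_num at hq2
    linarith
  · -- k = 1, a = 0, b^2 = 1 : p = 1/2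
    right; left
    have hbR : ((b:ℝ))^2 = 1 := by exact_mod_cast congrArg (Int.cast : ℤ → ℝ) hb2
    norm_num at hp2
    nlinarith [hp2, hbR]
end

section
/- Let a, b, c, d be integers and k a natural number such that a² + 2b² + c² + 2d² = 4^k and a·b + c·d = 0. Assume that a and b are not both even, and that c and d are not both even. Then k = 1, a = 0, c = 0, b² = 1 and d² = 1. -/
/-!
Reducing modulo 16, a pair `(x, y)` that is not both even has `x² + 2y²` in
`{1, 2, 3, 6, 9, 11}`, and no two of these residues add up to `0`; hence `16 ∤ 4^k`, i.e.
`k ≤ 1`, and `k = 0` is excluded because each pair contributes at least `1`. For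
`4 = (a² + 2b²) + (c² + 2d²)` all squares lie in `{0, 1}`, `a² + c²` is even, and
`a² = c² = 1` would force `b² = d²` through `(ab)² = (cd)²`, which is incompatible with
`2b² + 2d² = 2`.
-/

def primitiveNormsMod16 : Finset (ZMod 16) := {1, 2, 3, 6, 9, 11}

theorem sq_add_two_mul_sq_mem_primitiveNormsMod16 :
    ∀ x y : ZMod 16, ¬(8 * x = 0 ∧ 8 * y = 0) → x ^ 2 + 2 * y ^ 2 ∈ primitiveNormsMod16 := by
  decide

theorem add_ne_zero_of_mem_primitiveNormsMod16 :
    ∀ u ∈ primitiveNormsMod16, ∀ v ∈ primitiveNormsMod16, u + v ≠ 0 := by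
  decide

theorem Int.even_iff_eight_mul_intCast_zmod16_eq_zero (a : ℤ) :
    Even a ↔ 8 * (a : ZMod 16) = 0 := by
  rw [show 8 * (a : ZMod 16) = ((8 * a : ℤ) : ZMod 16) by push_cast; ring,
    ZMod.intCast_zmod_eq_zero_iff_dvd, even_iff_two_dvd]
  omega

theorem not_sixteen_dvd_sq_add_two_mul_sq_add_sq_add_two_mul_sq {a b c d : ℤ}
    (hab : ¬(Even a ∧ Even b)) (hcd : ¬(Even c ∧ Even d)) :
    ¬(16 : ℤ) ∣ a ^ 2 + 2 * b ^ 2 + c ^ 2 + 2 * d ^ 2 := by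
  simp only [Int.even_iff_eight_mul_intCast_zmod16_eq_zero] at hab hcd
  rw [show (16 : ℤ) = (16 : ℕ) from rfl, ← ZMod.intCast_zmod_eq_zero_iff_dvd,
    add_assoc _ (c ^ 2)]
  push_cast
  exact add_ne_zero_of_mem_primitiveNormsMod16 _
    (sq_add_two_mul_sq_mem_primitiveNormsMod16 _ _ hab) _
    (sq_add_two_mul_sq_mem_primitiveNormsMod16 _ _ hcd)

theorem one_le_sq_add_two_mul_sq {x y : ℤ} (h : x ≠ 0 ∨ y ≠ 0) : 1 ≤ x ^ 2 + 2 * y ^ 2 := by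
  rcases h with h | h <;> linarith [sq_pos_of_ne_zero h, sq_nonneg x, sq_nonneg y]

theorem Int.sq_le_one_of_sq_le_three {x : ℤ} (h : x ^ 2 ≤ 3) : x ^ 2 ≤ 1 := by
  have : |x| < 2 := abs_lt_of_sq_lt_sq (by linarith) (by norm_num)
  have : |x| ≤ 1 := by omega
  nlinarith [sq_abs x, abs_nonneg x]

theorem eq_zero_and_sq_eq_one_of_sq_add_two_mul_sq_add_eq_four {a b c d : ℤ}
    (h : a ^ 2 + 2 * b ^ 2 + c ^ 2 + 2 * d ^ 2 = 4) (horth : a * b + c * d = 0)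
    (hab : 1 ≤ a ^ 2 + 2 * b ^ 2) (hcd : 1 ≤ c ^ 2 + 2 * d ^ 2) :
    a = 0 ∧ c = 0 ∧ b ^ 2 = 1 ∧ d ^ 2 = 1 := by
  have hsq : a ^ 2 * b ^ 2 = c ^ 2 * d ^ 2 := by linear_combination (a * b - c * d) * horth
  have ha := Int.sq_le_one_of_sq_le_three (x := a) (by nlinarith [sq_nonneg b])
  have hb := Int.sq_le_one_of_sq_le_three (x := b) (by nlinarith [sq_nonneg a])
  have hc := Int.sq_le_one_of_sq_le_three (x := c) (by nlinarith [sq_nonneg d])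
  have hd := Int.sq_le_one_of_sq_le_three (x := d) (by nlinarith [sq_nonneg c])
  obtain ⟨ha₀, hc₀⟩ : a ^ 2 = 0 ∧ c ^ 2 = 0 := by
    obtain ha' | ha' : a ^ 2 = 0 ∨ a ^ 2 = 1 := by have := sq_nonneg a; omega
    all_goals obtain hc' | hc' : c ^ 2 = 0 ∨ c ^ 2 = 1 := by have := sq_nonneg c; omega
    all_goals rw [ha', hc'] at hsq h; omega
  rw [ha₀, hc₀] at h
  exact ⟨pow_eq_zero_iff two_ne_zero |>.mp ha₀, pow_eq_zero_iff two_ne_zero |>.mp hc₀, by omega,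
    by omega⟩

/-- If `a² + 2b² + c² + 2d² = 4^k` and `ab + cd = 0`, with
`a, b` not both even and `c, d` not both even, then `k = 1`, `a = c = 0`, and
`b² = d² = 1`. -/
theorem diophantine_four_pow_case
    (a b c d : ℤ) (k : ℕ)
    (h1 : a ^ 2 + 2 * b ^ 2 + c ^ 2 + 2 * d ^ 2 = 4 ^ k)
    (h2 : a * b + c * d = 0)
    (hab : ¬ (Even a ∧ Even b))
    (hcd : ¬ (Even c ∧ Even d)) :
    k = 1 ∧ a = 0 ∧ c = 0 ∧ b ^ 2 = 1 ∧ d ^ 2 = 1 := by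
  have hNab := one_le_sq_add_two_mul_sq (x := a) (y := b) (by contrapose! hab; simp [hab])
  have hNcd := one_le_sq_add_two_mul_sq (x := c) (y := d) (by contrapose! hcd; simp [hcd])
  have h16 := not_sixteen_dvd_sq_add_two_mul_sq_add_sq_add_two_mul_sq hab hcd
  rw [h1] at h16
  obtain rfl : k = 1 := by
    rcases k with _ | _ | k
    · norm_num at h1; linarith
    · rfl
    · exact absurd ⟨4 ^ k, by ring⟩ h16
  exact ⟨rfl,
    eq_zero_and_sq_eq_one_of_sq_add_two_mul_sq_add_eq_four (by simpa using h1) h2 hNab hNcd⟩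
end

section
/- Let n ≥ 1, let α = (ρ_1 e^{iφ_1}, …, ρ_n e^{iφ_n}) ∈ ℂ^n be a tuple of nonzero complex numbers in polar form, and let t be a weighted full binary tree with n leaves, the k-th leaf (in left-to-right order) carrying weight w_k = ρ_k² and phase φ_k. Then the 2^n × 2 matrix C(t) satisfies C(t)|1⟩ = |W(α)⟩. -/
/-! Writing `x = (x₁, x₂)` for the split of a bitstring along `t = (t₁, t₂)`, a node sends
`|1⟩` to `√(1-p) C(t₁)|1⟩ ⊗ C(t₂)|0⟩ + √p C(t₁)|0⟩ ⊗ C(t₂)|1⟩`. Every `C(t)` sends `|0⟩` to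
`|0…0⟩`, and `√(w(t₁)+w(t₂)) · √p = √w(t₂)`, so by induction `√w(t) · C(t)|1⟩` is the
unnormalised W-vector `Σₖ αₖ |eₖ⟩`, and `w(t) = w(α)`. -/

/-- A weighted full binary tree: either a leaf carrying a weight and a phase,
or an ordered pair of weighted full binary trees. -/
inductive WTree where
  | leaf (w : ℝ) (phase : ℝ)
  | node (t₁ t₂ : WTree)

namespace WTree

/-- Number of leaves. -/
def leaves : WTree → ℕ
  | .leaf _ _ => 1
  | .node t₁ t₂ => t₁.leaves + t₂.leaves

/-- Total weight of the leaves. -/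
def weight : WTree → ℝ
  | .leaf w _ => w
  | .node t₁ t₂ => t₁.weight + t₂.weight

/-- The list of (weight, phase) pairs of the leaves, in left-to-right order. -/
def leafData : WTree → List (ℝ × ℝ)
  | .leaf w φ => [(w, φ)]
  | .node t₁ t₂ => t₁.leafData ++ t₂.leafData

end WTree

/-- The `4 × 2` isometry `F_p = |00⟩⟨0| + √p |01⟩⟨1| + √(1-p) |10⟩⟨1|`,
with its output index pair `(b₁, b₂)` encoding the bitstring `b₁b₂`. -/
noncomputable def Fp (p : ℝ) : Bool × Bool → Bool → ℂ
  | (false, false), false => 1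
  | (false, true), true => ((Real.sqrt p : ℝ) : ℂ)
  | (true, false), true => ((Real.sqrt (1 - p) : ℝ) : ℂ)
  | _, _ => 0

/-- The `2^{ℓ(t)} × 2` matrix `C(t)`, built recursively:
`C(⊥ᵢ) = P(φᵢ) = diag(1, e^{iφᵢ})` on a leaf, and
`C(t₁, t₂) = (C(t₁) ⊗ C(t₂)) · F_p` with `p = w(t₂)/w(t)` on a node. -/
noncomputable def Ckt : (t : WTree) → (Fin t.leaves → Bool) → Bool → ℂ
  | .leaf _ φ => fun x i =>
      if x = fun _ => i then (if i then Complex.exp (φ * Complex.I) else 1)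
      else 0
  | .node t₁ t₂ => fun x i =>
      ∑ b : Bool × Bool,
        Ckt t₁ (fun j => x (Fin.castAdd t₂.leaves j)) b.1 *
        Ckt t₂ (fun j => x (Fin.natAdd t₁.leaves j)) b.2 *
        Fp (t₂.weight / (t₁.weight + t₂.weight)) b i

/-- The computational basis vector of `ℂ^{2^n}` indexed by the bitstring `x`. -/
def basisState {n : ℕ} (x : Fin n → Bool) : (Fin n → Bool) → ℂ :=
  fun y => if y = x then 1 else 0

/-- The weight `w(α) = Σ_i |α_i|²` of a tuple of complex numbers. -/
noncomputable def wSum {n : ℕ} (α : Fin n → ℂ) : ℝ :=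
  ∑ i, ‖α i‖ ^ 2

/-- The weighted W-state `|W(α)⟩ = (1/√w(α)) Σ_k α_k |e_k⟩ ∈ ℂ^{2^n}`. -/
noncomputable def wState {n : ℕ} (α : Fin n → ℂ) : (Fin n → Bool) → ℂ :=
  fun y => ((Real.sqrt (wSum α) : ℝ) : ℂ)⁻¹ *
    ∑ k : Fin n, α k * basisState (fun i => decide (i = k)) y

theorem Real.sqrt_add_mul_sqrt_div_add {a b : ℝ} (ha : 0 ≤ a) (hb : 0 ≤ b) :
    √(a + b) * √(b / (a + b)) = √b := by
  rcases (add_nonneg ha hb).eq_or_lt with hab | hab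
  · rw [← hab, (add_eq_zero_iff_of_nonneg ha hb).mp hab.symm |>.2]; simp
  · rw [← Real.sqrt_mul hab.le, mul_div_cancel₀ _ hab.ne']

theorem Real.sqrt_add_mul_sqrt_one_sub_div_add {a b : ℝ} (ha : 0 ≤ a) (hb : 0 ≤ b) :
    √(a + b) * √(1 - b / (a + b)) = √a := by
  rcases (add_nonneg ha hb).eq_or_lt with hab | hab
  · rw [← hab, (add_eq_zero_iff_of_nonneg ha hb).mp hab.symm |>.1]; simp
  · rw [one_sub_div hab.ne', add_sub_cancel_right, add_comm,
      Real.sqrt_add_mul_sqrt_div_add hb ha]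

namespace WTree

theorem leafData_length (t : WTree) : t.leafData.length = t.leaves := by
  induction t with
  | leaf => rfl
  | node t₁ t₂ ih₁ ih₂ => simp [leafData, leaves, ih₁, ih₂]

theorem leaves_pos (t : WTree) : 0 < t.leaves := by
  induction t with
  | leaf => exact Nat.one_pos
  | node t₁ t₂ ih₁ _ => exact Nat.add_pos_left ih₁ _

theorem weight_eq_sum_of_leafData_eq_ofFn {t : WTree} {f : Fin t.leaves → ℝ × ℝ}
    (h : t.leafData = List.ofFn f) : t.weight = ∑ k, (f k).1 := by
  have weight_eq (s : WTree) : s.weight = (s.leafData.map Prod.fst).sum := by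
    induction s with
    | leaf => simp [weight, leafData]
    | node s₁ s₂ ih₁ ih₂ => simp [weight, leafData, ih₁, ih₂]
  rw [weight_eq, h, List.map_ofFn, List.sum_ofFn]; rfl

theorem leafData_eq_ofFn_of_node {t₁ t₂ : WTree} {f : Fin (t₁.leaves + t₂.leaves) → ℝ × ℝ}
    (h : (node t₁ t₂).leafData = List.ofFn f) :
    t₁.leafData = List.ofFn (fun i => f (Fin.castAdd t₂.leaves i)) ∧
      t₂.leafData = List.ofFn (fun j => f (Fin.natAdd t₁.leaves j)) :=
  List.append_inj (h.trans List.ofFn_add) (by simp [leafData_length])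

end WTree

theorem basisState_add_apply {n m : ℕ} (e x : Fin (n + m) → Bool) :
    basisState e x =
      basisState (fun i => e (Fin.castAdd m i)) (fun i => x (Fin.castAdd m i)) *
        basisState (fun j => e (Fin.natAdd n j)) (fun j => x (Fin.natAdd n j)) := by
  have split : x = e ↔ ((fun i => x (Fin.castAdd m i)) = fun i => e (Fin.castAdd m i)) ∧
      ((fun j => x (Fin.natAdd n j)) = fun j => e (Fin.natAdd n j)) := by
    refine ⟨by rintro rfl; exact ⟨rfl, rfl⟩, fun ⟨h₁, h₂⟩ => funext fun k => ?_⟩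
    exact Fin.addCases (congrFun h₁) (congrFun h₂) k
  simp only [basisState, split, ite_and, ite_mul, one_mul, zero_mul]

def wVec {n : ℕ} (α : Fin n → ℂ) : (Fin n → Bool) → ℂ :=
  fun y => ∑ k, α k * basisState (fun i => decide (i = k)) y

theorem wVec_add_apply {n m : ℕ} (α : Fin (n + m) → ℂ) (x : Fin (n + m) → Bool) :
    wVec α x =
      wVec (fun i => α (Fin.castAdd m i)) (fun i => x (Fin.castAdd m i)) *
          basisState (fun _ => false) (fun j => x (Fin.natAdd n j)) +
        basisState (fun _ => false) (fun i => x (Fin.castAdd m i)) *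
          wVec (fun j => α (Fin.natAdd n j)) (fun j => x (Fin.natAdd n j)) := by
  have left (k : Fin n) (i : Fin m) : Fin.natAdd n i ≠ Fin.castAdd m k := by
    simp only [ne_eq, Fin.ext_iff, Fin.val_natAdd, Fin.val_castAdd]; omega
  have right (k : Fin m) (i : Fin n) : Fin.castAdd m i ≠ Fin.natAdd n k := (left i k).symm
  simp only [wVec, Fin.sum_univ_add, basisState_add_apply, Finset.sum_mul, Finset.mul_sum,
    Fin.castAdd_inj, Fin.natAdd_inj, left, right, decide_false]
  congr 1 <;> exact Finset.sum_congr rfl fun _ _ => by ring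

theorem Ckt_false (t : WTree) (x : Fin t.leaves → Bool) :
    Ckt t x false = basisState (fun _ => false) x := by
  induction t with
  | leaf => simp [Ckt, basisState]
  | node t₁ t₂ ih₁ ih₂ =>
    simp only [Ckt, Fintype.sum_prod_type, Fintype.sum_bool, Fp, ih₁, ih₂, mul_zero, mul_one,
      zero_add]
    exact (basisState_add_apply (n := t₁.leaves) (m := t₂.leaves) (fun _ => false) x).symm

theorem Ckt_node_true (t₁ t₂ : WTree) (x : Fin (t₁.leaves + t₂.leaves) → Bool) :
    Ckt (t₁.node t₂) x true =
      Ckt t₁ (fun i => x (Fin.castAdd t₂.leaves i)) true *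
          Ckt t₂ (fun j => x (Fin.natAdd t₁.leaves j)) false *
          (√(1 - t₂.weight / (t₁.weight + t₂.weight)) : ℝ) +
        Ckt t₁ (fun i => x (Fin.castAdd t₂.leaves i)) false *
          Ckt t₂ (fun j => x (Fin.natAdd t₁.leaves j)) true *
          (√(t₂.weight / (t₁.weight + t₂.weight)) : ℝ) := by
  simp only [Ckt, Fintype.sum_prod_type, Fintype.sum_bool, Fp, mul_zero, add_zero, zero_add]

theorem sqrt_weight_mul_Ckt_leaf_true (w ψ : ℝ) (ρ φ : Fin 1 → ℝ) (hρ : ∀ k, 0 ≤ ρ k)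
    (hleaf : [(w, ψ)] = List.ofFn (fun k => (ρ k ^ 2, φ k))) (x : Fin 1 → Bool) :
    (√w : ℝ) * Ckt (.leaf w ψ) x true =
      wVec (fun k => (ρ k : ℂ) * Complex.exp (φ k * Complex.I)) x := by
  obtain ⟨rfl, rfl⟩ : w = ρ 0 ^ 2 ∧ ψ = φ 0 := by simpa using hleaf
  have e₀ : (fun i : Fin 1 => decide (i = 0)) = fun _ => true := by
    funext i; simp [Fin.fin_one_eq_zero i]
  simp only [Real.sqrt_sq (hρ 0), Ckt, wVec, Fintype.sum_unique, Fin.default_eq_zero, e₀,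
    basisState]
  split_ifs with h₁ h₂ h₂
  exacts [by simp, absurd h₁ h₂, absurd h₂ h₁, by simp]

theorem sqrt_weight_mul_Ckt_node_true {t₁ t₂ : WTree} {ρ φ : Fin (t₁.leaves + t₂.leaves) → ℝ}
    (hw₁ : 0 ≤ t₁.weight) (hw₂ : 0 ≤ t₂.weight) (x : Fin (t₁.leaves + t₂.leaves) → Bool)
    (ih₁ : (√t₁.weight : ℝ) * Ckt t₁ (fun i => x (Fin.castAdd t₂.leaves i)) true =
      wVec (fun i => (ρ (Fin.castAdd t₂.leaves i) : ℂ) *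
        Complex.exp (φ (Fin.castAdd t₂.leaves i) * Complex.I))
        (fun i => x (Fin.castAdd t₂.leaves i)))
    (ih₂ : (√t₂.weight : ℝ) * Ckt t₂ (fun j => x (Fin.natAdd t₁.leaves j)) true =
      wVec (fun j => (ρ (Fin.natAdd t₁.leaves j) : ℂ) *
        Complex.exp (φ (Fin.natAdd t₁.leaves j) * Complex.I))
        (fun j => x (Fin.natAdd t₁.leaves j))) :
    (√(t₁.node t₂).weight : ℝ) * Ckt (t₁.node t₂) x true =
      wVec (fun k => (ρ k : ℂ) * Complex.exp (φ k * Complex.I)) x := by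
  rw [Ckt_node_true, wVec_add_apply, ← ih₁, ← ih₂, Ckt_false, Ckt_false]
  have h₁ := congrArg (fun r : ℝ => (r : ℂ)) (Real.sqrt_add_mul_sqrt_one_sub_div_add hw₁ hw₂)
  have h₂ := congrArg (fun r : ℝ => (r : ℂ)) (Real.sqrt_add_mul_sqrt_div_add hw₁ hw₂)
  simp only [Complex.ofReal_mul] at h₁ h₂
  simp only [WTree.weight]
  linear_combination
    Ckt t₁ (fun i => x (Fin.castAdd t₂.leaves i)) true *
      basisState (fun _ => false) (fun j => x (Fin.natAdd t₁.leaves j)) * h₁ +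
    Ckt t₂ (fun j => x (Fin.natAdd t₁.leaves j)) true *
      basisState (fun _ => false) (fun i => x (Fin.castAdd t₂.leaves i)) * h₂

theorem sqrt_weight_mul_Ckt_true (t : WTree) (ρ φ : Fin t.leaves → ℝ) (hρ : ∀ k, 0 ≤ ρ k)
    (hleaf : t.leafData = List.ofFn (fun k => (ρ k ^ 2, φ k))) (x : Fin t.leaves → Bool) :
    (√t.weight : ℝ) * Ckt t x true =
      wVec (fun k => (ρ k : ℂ) * Complex.exp (φ k * Complex.I)) x := by
  induction t with
  | leaf w ψ => exact sqrt_weight_mul_Ckt_leaf_true w ψ ρ φ hρ hleaf x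
  | node t₁ t₂ ih₁ ih₂ =>
    obtain ⟨hl₁, hl₂⟩ := WTree.leafData_eq_ofFn_of_node hleaf
    have hw₁ : 0 ≤ t₁.weight := by
      rw [WTree.weight_eq_sum_of_leafData_eq_ofFn hl₁]; positivity
    have hw₂ : 0 ≤ t₂.weight := by
      rw [WTree.weight_eq_sum_of_leafData_eq_ofFn hl₂]; positivity
    exact sqrt_weight_mul_Ckt_node_true hw₁ hw₂ x (ih₁ _ _ (fun _ => hρ _) hl₁ _)
      (ih₂ _ _ (fun _ => hρ _) hl₂ _)

theorem wSum_ofReal_mul_exp {n : ℕ} (ρ φ : Fin n → ℝ) :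
    wSum (fun k => (ρ k : ℂ) * Complex.exp (φ k * Complex.I)) = ∑ k, ρ k ^ 2 := by
  simp [wSum, Complex.norm_exp_ofReal_mul_I]

/-- If `t` is a weighted full binary tree whose `k`-th leaf
(in left-to-right order) carries weight `ρ_k²` and phase `φ_k`, where each
`ρ_k > 0`, then `C(t) |1⟩ = |W(α)⟩` for `α = (ρ_k e^{iφ_k})_k`. -/
theorem Ckt_one_eq_wState
    (t : WTree) (ρ φ : Fin t.leaves → ℝ) (hρ : ∀ k, 0 < ρ k)
    (hleaf : t.leafData = List.ofFn (fun k => (ρ k ^ 2, φ k))) :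
    (fun x => Ckt t x true) =
      wState (fun k => (ρ k : ℂ) * Complex.exp (φ k * Complex.I)) := by
  have hw : wSum (fun k => (ρ k : ℂ) * Complex.exp (φ k * Complex.I)) = t.weight := by
    rw [wSum_ofReal_mul_exp, WTree.weight_eq_sum_of_leafData_eq_ofFn hleaf]
  have hpos : 0 < t.weight := by
    rw [WTree.weight_eq_sum_of_leafData_eq_ofFn hleaf]
    exact Finset.sum_pos (fun k _ => pow_pos (hρ k) 2) ⟨⟨0, t.leaves_pos⟩, Finset.mem_univ _⟩
  have hsqrt : ((√t.weight : ℝ) : ℂ) ≠ 0 := by exact_mod_cast (Real.sqrt_pos.mpr hpos).ne'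
  funext x
  rw [wState, hw, ← wVec, ← sqrt_weight_mul_Ckt_true t ρ φ (fun k => (hρ k).le) hleaf,
    inv_mul_cancel_left₀ hsqrt]
end

section
/- Let t be a complete full binary tree. Then for every depth d, at most one of the subtrees of t rooted at a node of depth d fails to be perfect. -/
/-- A full binary tree: either a leaf or an ordered pair of full binary
trees. -/
inductive BTree where
  | leaf
  | node (t₁ t₂ : BTree)

namespace BTree

/-- Number of leaves. -/
def leaves : BTree → ℕ
  | .leaf => 1
  | .node t₁ t₂ => t₁.leaves + t₂.leaves

/-- Height of the tree (a single leaf has height `0`). -/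
def height : BTree → ℕ
  | .leaf => 0
  | .node t₁ t₂ => max t₁.height t₂.height + 1

/-- A tree is perfect if all of its leaves are at the same depth. -/
def Perfect : BTree → Prop
  | .leaf => True
  | .node t₁ t₂ => t₁.Perfect ∧ t₂.Perfect ∧ t₁.height = t₂.height

/-- A tree is complete if every level except possibly the last is completely
filled, and all leaves in the last level are as far left as possible:
a node is complete iff either its left subtree is perfect and its right
subtree is complete, of equal heights, or its left subtree is complete and
its right subtree is perfect, of height one less. -/
def Complete : BTree → Prop
  | .leaf => True
  | .node t₁ t₂ =>
      (t₁.Perfect ∧ t₂.Complete ∧ t₁.height = t₂.height) ∨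
      (t₁.Complete ∧ t₂.Perfect ∧ t₁.height = t₂.height + 1)

/-- Deciding perfection. -/
instance perfectDecidable : (t : BTree) → Decidable t.Perfect
  | .leaf => .isTrue trivial
  | .node t₁ t₂ =>
      haveI : Decidable t₁.Perfect := perfectDecidable t₁
      haveI : Decidable t₂.Perfect := perfectDecidable t₂
      inferInstanceAs (Decidable (t₁.Perfect ∧ t₂.Perfect ∧ t₁.height = t₂.height))

/-- The list of subtrees of `t` rooted at the nodes of depth `d`, in
left-to-right order. -/
def subtreesAt : ℕ → BTree → List BTree
  | 0, t => [t]
  | _ + 1, .leaf => []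
  | d + 1, .node t₁ t₂ => subtreesAt d t₁ ++ subtreesAt d t₂

end BTree

/-! A complete tree splits into a perfect child and a complete child. Every subtree of a
perfect tree is perfect, so at depth `d + 1` all the imperfect subtrees lie below the
complete child, at depth `d`, and induction on `d` bounds their number by one. -/

namespace BTree

theorem Perfect.of_mem_subtreesAt {t s : BTree} (ht : t.Perfect) :
    ∀ {d : ℕ}, s ∈ subtreesAt d t → s.Perfect := by
  induction t with
  | leaf => rintro (_ | d) hs <;> simp_all [subtreesAt]
  | node t₁ t₂ ih₁ ih₂ =>
    rintro (_ | d) hs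
    · exact List.mem_singleton.mp hs ▸ ht
    · obtain ⟨h₁, h₂, -⟩ := ht
      rcases List.mem_append.mp hs with hs | hs
      exacts [ih₁ h₁ hs, ih₂ h₂ hs]

theorem Perfect.countP_not_perfect_subtreesAt {t : BTree} (ht : t.Perfect) (d : ℕ) :
    (subtreesAt d t).countP (fun s => decide (¬ s.Perfect)) = 0 :=
  List.countP_eq_zero.mpr fun _ hs => by simpa using ht.of_mem_subtreesAt hs

end BTree

/-- In a complete full binary tree, for every depth `d`, at
most one of the subtrees rooted at a node of depth `d` fails to be perfect. -/
theorem complete_at_most_one_imperfect_per_depth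
    (t : BTree) (ht : t.Complete) (d : ℕ) :
    ((BTree.subtreesAt d t).countP (fun s => decide (¬ s.Perfect))) ≤ 1 := by
  induction d generalizing t with
  | zero => exact List.countP_le_length
  | succ d ih =>
    cases t with
    | leaf => simp [BTree.subtreesAt]
    | node t₁ t₂ =>
      rw [BTree.subtreesAt, List.countP_append]
      rcases ht with ⟨h₁, h₂, -⟩ | ⟨h₁, h₂, -⟩
      · rw [h₁.countP_not_perfect_subtreesAt, zero_add]
        exact ih t₂ h₂
      · rw [h₂.countP_not_perfect_subtreesAt, add_zero]
        exact ih t₁ h₁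
end

section
/- Let t be a complete full binary tree with n ≥ 1 leaves. Then the number of internal nodes (t₁,t₂) of t whose two subtrees have unequal numbers of leaves, i.e. ℓ(t₁) ≠ ℓ(t₂), is at most ⌈log₂ n⌉. -/
namespace BTree

/-- The number of internal nodes `(t₁, t₂)` of `t` whose two subtrees have
unequal numbers of leaves. -/
def unbalancedCount : BTree → ℕ
  | .leaf => 0
  | .node t₁ t₂ =>
      (if t₁.leaves = t₂.leaves then 0 else 1) +
        t₁.unbalancedCount + t₂.unbalancedCount

end BTree

/-!
At every internal node of a complete tree one of the two subtrees is perfect, hence contains no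
unbalanced node; so the unbalanced nodes lie on a single root-to-leaf path and there are at most
`height t` of them. A complete tree of height `h` has more than `2 ^ (h - 1)` leaves, so
`h ≤ ⌈log₂ n⌉`.
-/

namespace BTree

theorem leaves_pos (t : BTree) : 0 < t.leaves := by
  induction t with
  | leaf => exact Nat.one_pos
  | node t₁ t₂ ih₁ _ => exact Nat.add_pos_left ih₁ _

theorem Perfect.leaves_eq_two_pow_height {t : BTree} (h : t.Perfect) :
    t.leaves = 2 ^ t.height := by
  induction t with
  | leaf => rfl
  | node t₁ t₂ ih₁ ih₂ =>
    obtain ⟨h₁, h₂, heq⟩ := h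
    simp only [leaves, height, ih₁ h₁, ih₂ h₂, heq, max_self, pow_succ, mul_two]

theorem Perfect.unbalancedCount_eq_zero {t : BTree} (h : t.Perfect) : t.unbalancedCount = 0 := by
  induction t with
  | leaf => rfl
  | node t₁ t₂ ih₁ ih₂ =>
    obtain ⟨h₁, h₂, heq⟩ := h
    simp [unbalancedCount, ih₁ h₁, ih₂ h₂, h₁.leaves_eq_two_pow_height,
      h₂.leaves_eq_two_pow_height, heq]

theorem Complete.unbalancedCount_le_height {t : BTree} (h : t.Complete) :
    t.unbalancedCount ≤ t.height := by
  induction t with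
  | leaf => exact le_rfl
  | node t₁ t₂ ih₁ ih₂ =>
    have hind : (if t₁.leaves = t₂.leaves then 0 else 1) ≤ 1 := by split <;> omega
    rcases h with ⟨h₁, h₂, heq⟩ | ⟨h₁, h₂, heq⟩
    · have := ih₂ h₂
      simp only [unbalancedCount, height, h₁.unbalancedCount_eq_zero, heq, max_self]
      omega
    · have := ih₁ h₁
      simp only [unbalancedCount, height, h₂.unbalancedCount_eq_zero, heq]
      omega

theorem Complete.two_pow_height_lt_two_mul_leaves {t : BTree} (h : t.Complete) :
    2 ^ t.height < 2 * t.leaves := by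
  induction t with
  | leaf => decide
  | node t₁ t₂ ih₁ _ =>
    rcases h with ⟨h₁, _, heq⟩ | ⟨h₁, h₂, heq⟩
    · have := t₂.leaves_pos
      simp only [leaves, height, h₁.leaves_eq_two_pow_height, heq, max_self, pow_succ]
      omega
    · have := ih₁ h₁
      simp only [heq, pow_succ] at this
      simp only [leaves, height, h₂.leaves_eq_two_pow_height, heq, pow_succ,
        max_eq_left (Nat.le_succ t₂.height)]
      omega

theorem Complete.height_le_clog_leaves {t : BTree} (h : t.Complete) :
    t.height ≤ Nat.clog 2 t.leaves := by
  have hlt := h.two_pow_height_lt_two_mul_leaves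
  cases hh : t.height with
  | zero => exact Nat.zero_le _
  | succ k =>
    rw [hh, pow_succ] at hlt
    exact Nat.lt_clog_iff_pow_lt one_lt_two |>.mpr (by omega)

end BTree

theorem complete_unbalancedCount_le_clog_general
    (t : BTree) (ht : t.Complete) :
    t.unbalancedCount ≤ Nat.clog 2 t.leaves :=
  ht.unbalancedCount_le_height.trans ht.height_le_clog_leaves

/-- In a complete full binary tree with `n ≥ 1` leaves, the
number of internal nodes whose two subtrees have unequal numbers of leaves is
at most `⌈log₂ n⌉`. -/
theorem complete_unbalancedCount_le_clog
    (t : BTree) (ht : t.Complete) (hn : 1 ≤ t.leaves) :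
    t.unbalancedCount ≤ Nat.clog 2 t.leaves :=
  complete_unbalancedCount_le_clog_general t ht
end

section
/- Let n ≥ 3. The stabilizer group of the n-qubit uniform W-state |W_n⟩ consists of exactly two Pauli strings: the identity I^{⊗n} (with phase 1) and −Z^{⊗n} (the n-fold tensor power of Z with phase −1). In particular |Stab(|W_n⟩)| = 2. -/
open scoped Matrix

/-- The single-qubit Pauli `I` matrix. -/
def pauliI : Matrix Bool Bool ℂ := Matrix.of fun x y => if x = y then 1 else 0

/-- The single-qubit Pauli `X` matrix. -/
def pauliX : Matrix Bool Bool ℂ := Matrix.of fun x y => if x = y then 0 else 1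

/-- The single-qubit Pauli `Y` matrix, `[[0, -i], [i, 0]]`. -/
def pauliY : Matrix Bool Bool ℂ :=
  Matrix.of fun x y =>
    if x = y then 0 else if x then Complex.I else -Complex.I

/-- The single-qubit Pauli `Z` matrix, `[[1, 0], [0, -1]]`. -/
def pauliZ : Matrix Bool Bool ℂ :=
  Matrix.of fun x y => if x = y then (if x then -1 else 1) else 0

/-- The `n`-fold Kronecker product `P_1 ⊗ ⋯ ⊗ P_n` of single-qubit matrices,
as an operator on `ℂ^{2^n}` (indexed by bitstrings). -/
def pauliTensor {n : ℕ} (P : Fin n → Matrix Bool Bool ℂ) :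
    Matrix (Fin n → Bool) (Fin n → Bool) ℂ :=
  Matrix.of fun x y => ∏ j, P j (x j) (y j)

/-- An `n`-qubit Pauli string: `λ · (P_1 ⊗ ⋯ ⊗ P_n)` with
`λ ∈ {1, -1, i, -i}` and each `P_j ∈ {I, X, Y, Z}`. -/
def IsPauliString {n : ℕ}
    (M : Matrix (Fin n → Bool) (Fin n → Bool) ℂ) : Prop :=
  ∃ (lam : ℂ) (P : Fin n → Matrix Bool Bool ℂ),
    (lam = 1 ∨ lam = -1 ∨ lam = Complex.I ∨ lam = -Complex.I) ∧
    (∀ j, P j = pauliI ∨ P j = pauliX ∨ P j = pauliY ∨ P j = pauliZ) ∧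
    M = lam • pauliTensor P

/-- The stabilizer group of a state `ψ ∈ ℂ^{2^n}`: the set of Pauli strings
`P` with `P ψ = ψ`. -/
def Stab {n : ℕ} (ψ : (Fin n → Bool) → ℂ) :
    Set (Matrix (Fin n → Bool) (Fin n → Bool) ℂ) :=
  {M | IsPauliString M ∧ M.mulVec ψ = ψ}

/-- The `n`-qubit uniform W-state `(1/√n) Σ_k |e_k⟩`. -/
noncomputable def uniformW (n : ℕ) : (Fin n → Bool) → ℂ :=
  fun y => ((Real.sqrt n : ℝ) : ℂ)⁻¹ *
    ∑ k : Fin n, basisState (fun i => decide (i = k)) y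


section StabWHelpers

/-- basis bitstring with a single 1 at position `k`. -/
def eVec {n : ℕ} (k : Fin n) : Fin n → Bool := fun i => decide (i = k)

lemma eVec_inj {n : ℕ} {k m : Fin n} (h : eVec k = eVec m) : k = m := by
  have := congrFun h k
  simpa [eVec] using this

lemma pauli_decomp {Q : Matrix Bool Bool ℂ}
    (hQ : Q = pauliI ∨ Q = pauliX ∨ Q = pauliY ∨ Q = pauliZ) :
    ∃ ε : Bool, (∀ b, Q (xor b ε) b ≠ 0) ∧ (∀ a b, a ≠ xor b ε → Q a b = 0) := by
  rcases hQ with h | h | h | h <;> subst h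
  · exact ⟨false, fun b => by cases b <;> simp [pauliI],
      fun a b hab => by cases a <;> cases b <;> simp_all [pauliI]⟩
  · exact ⟨true, fun b => by cases b <;> simp [pauliX],
      fun a b hab => by cases a <;> cases b <;> simp_all [pauliX]⟩
  · exact ⟨true, fun b => by cases b <;> simp [pauliY, Complex.I_ne_zero],
      fun a b hab => by cases a <;> cases b <;> simp_all [pauliY]⟩
  · exact ⟨false, fun b => by cases b <;> simp [pauliZ],
      fun a b hab => by cases a <;> cases b <;> simp_all [pauliZ]⟩

lemma sqrtc_ne_zero {n : ℕ} (hn : 0 < n) : ((Real.sqrt n : ℝ) : ℂ)⁻¹ ≠ 0 := by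
  have : (0:ℝ) < Real.sqrt n := Real.sqrt_pos.mpr (by exact_mod_cast hn)
  simp [Complex.ofReal_ne_zero, ne_of_gt this]

lemma uniformW_apply {n : ℕ} (y : Fin n → Bool) :
    uniformW n y = ((Real.sqrt n : ℝ) : ℂ)⁻¹ * ∑ k : Fin n, (if y = eVec k then 1 else 0) := rfl

lemma uniformW_eVec {n : ℕ} (k : Fin n) :
    uniformW n (eVec k) = ((Real.sqrt n : ℝ) : ℂ)⁻¹ := by
  rw [uniformW_apply]
  rw [Finset.sum_eq_single k]
  · simp
  · intro m _ hm
    simp only [ite_eq_right_iff]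
    intro h; exact absurd (eVec_inj h).symm hm
  · simp

lemma uniformW_eq_zero {n : ℕ} {y : Fin n → Bool} (h : ∀ k, y ≠ eVec k) :
    uniformW n y = 0 := by
  rw [uniformW_apply]
  rw [Finset.sum_eq_zero]
  · simp
  · intro m _; simp [h m]

lemma mulVec_pauli {n : ℕ} (lam : ℂ) (P : Fin n → Matrix Bool Bool ℂ) (x : Fin n → Bool) :
    ((lam • pauliTensor P).mulVec (uniformW n)) x
      = lam * ((Real.sqrt n : ℝ) : ℂ)⁻¹ * ∑ k : Fin n, ∏ j, P j (x j) (eVec k j) := by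
  simp only [Matrix.mulVec, dotProduct, Matrix.smul_apply, smul_eq_mul,
    uniformW_apply, pauliTensor, Matrix.of_apply, Finset.mul_sum, Finset.sum_mul]
  rw [Finset.sum_comm]
  refine Finset.sum_congr rfl fun k _ => ?_
  rw [Finset.sum_eq_single (eVec k)]
  · simp [mul_comm, mul_assoc, mul_left_comm]
  · intro y _ hy; simp [hy]
  · simp


lemma prod_pauliI {n : ℕ} (x y : Fin n → Bool) :
    (∏ j, pauliI (x j) (y j)) = if x = y then 1 else 0 := by
  by_cases h : x = y
  · subst h
    simp [pauliI]
  · obtain ⟨j, hj⟩ := Function.ne_iff.mp h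
    rw [if_neg h]
    exact Finset.prod_eq_zero (Finset.mem_univ j) (by simp [pauliI, hj])

lemma prod_pauliZ {n : ℕ} (x : Fin n → Bool) (k : Fin n) :
    (∏ j, pauliZ (x j) (eVec k j)) = if x = eVec k then -1 else 0 := by
  by_cases h : x = eVec k
  · subst h
    rw [if_pos rfl]
    rw [Finset.prod_eq_single k]
    · simp [pauliZ, eVec]
    · intro j _ hj
      simp [pauliZ, eVec, hj]
    · simp
  · obtain ⟨j, hj⟩ := Function.ne_iff.mp h
    rw [if_neg h]
    exact Finset.prod_eq_zero (Finset.mem_univ j) (by simp [pauliZ, hj])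

end StabWHelpers

/-- For `n ≥ 3`, the stabilizer group of the uniform
W-state consists exactly of `I^{⊗n}` and `-Z^{⊗n}`; in particular it has two
elements. -/
theorem stab_uniformW (n : ℕ) (hn : 3 ≤ n) :
    Stab (uniformW n) =
      {pauliTensor (fun _ : Fin n => pauliI),
       (-1 : ℂ) • pauliTensor (fun _ : Fin n => pauliZ)} ∧
    (Stab (uniformW n)).ncard = 2 := by
  have hc0 : ((Real.sqrt n : ℝ) : ℂ)⁻¹ ≠ 0 := sqrtc_ne_zero (by omega)
  set c : ℂ := ((Real.sqrt n : ℝ) : ℂ)⁻¹ with hc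
  -- membership of identity
  have memI : pauliTensor (fun _ : Fin n => pauliI) ∈ Stab (uniformW n) := by
    constructor
    · exact ⟨1, fun _ => pauliI, Or.inl rfl, fun _ => Or.inl rfl, (one_smul ℂ _).symm⟩
    · funext x
      have h1 : pauliTensor (fun _ : Fin n => pauliI)
          = (1 : ℂ) • pauliTensor (fun _ : Fin n => pauliI) := (one_smul ℂ _).symm
      rw [h1, mulVec_pauli]
      simp only [prod_pauliI, one_mul]
      rw [uniformW_apply]
  -- membership of -Z^{⊗n}
  have memZ : (-1 : ℂ) • pauliTensor (fun _ : Fin n => pauliZ) ∈ Stab (uniformW n) := by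
    constructor
    · exact ⟨-1, fun _ => pauliZ, Or.inr (Or.inl rfl), fun _ => Or.inr (Or.inr (Or.inr rfl)), rfl⟩
    · funext x
      rw [mulVec_pauli]
      simp only [prod_pauliZ]
      rw [uniformW_apply]
      have hs : (∑ k : Fin n, if x = eVec k then (-1:ℂ) else 0)
          = -∑ k : Fin n, if x = eVec k then (1:ℂ) else 0 := by
        rw [← Finset.sum_neg_distrib]
        exact Finset.sum_congr rfl fun k _ => by split <;> simp
      rw [hs]
      ring
  have hne : pauliTensor (fun _ : Fin n => pauliI)
      ≠ (-1 : ℂ) • pauliTensor (fun _ : Fin n => pauliZ) := by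
    intro h
    have := congrFun (congrFun h (fun _ => false)) (fun _ => false)
    simp [pauliTensor, pauliI, pauliZ, Matrix.smul_apply] at this
    exact absurd this (by norm_num)
  have hset : Stab (uniformW n) =
      {pauliTensor (fun _ : Fin n => pauliI),
       (-1 : ℂ) • pauliTensor (fun _ : Fin n => pauliZ)} := by
    apply Set.eq_of_subset_of_subset
    · rintro M ⟨⟨lam, P, hlam, hP, rfl⟩, hfix⟩
      have hlam0 : lam ≠ 0 := by
        rcases hlam with h | h | h | h <;> subst h <;> simp [Complex.I_ne_zero]
      have hfix' : ∀ x, lam * c * ∑ k : Fin n, ∏ j, P j (x j) (eVec k j) = uniformW n x := by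
        intro x
        rw [← mulVec_pauli]
        exact congrFun hfix x
      choose eps h1 h2 using fun j => pauli_decomp (hP j)
      set xk : Fin n → Fin n → Bool := fun k j => xor (eVec k j) (eps j) with hxk
      have hT : ∀ k, (∏ j, P j (xk k j) (eVec k j)) ≠ 0 :=
        fun k => Finset.prod_ne_zero_iff.mpr fun j _ => h1 j (eVec k j)
      have hsum : ∀ k, (∑ m : Fin n, ∏ j, P j (xk k j) (eVec m j))
          = ∏ j, P j (xk k j) (eVec k j) := by
        intro k
        apply Finset.sum_eq_single k
        · intro m _ hm
          apply Finset.prod_eq_zero (Finset.mem_univ k)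
          apply h2
          have h3 : eVec m k = false := by simp [eVec]; exact fun h => hm h.symm
          have h4 : eVec k k = true := by simp [eVec]
          rw [h3]
          simp only [hxk, h4]
          cases eps k <;> simp
        · simp
      have hex : ∀ k, ∃ m, xk k = eVec m := by
        intro k
        by_contra hcon
        push_neg at hcon
        have hz : uniformW n (xk k) = 0 := uniformW_eq_zero hcon
        have := hfix' (xk k)
        rw [hsum k, hz] at this
        exact (mul_ne_zero (mul_ne_zero hlam0 hc0) (hT k)) this
      choose m hm using hex
      have heps : ∀ j, eps j = false := by
        by_cases hcase : ∃ k, m k = k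
        · obtain ⟨k, hk⟩ := hcase
          intro j
          have h5 := congrFun (hm k) j
          rw [hk] at h5
          simp only [hxk] at h5
          revert h5
          cases eVec k j <;> cases eps j <;> simp
        · push_neg at hcase
          exfalso
          have hepsT : ∀ k, eps k = true := by
            intro k
            have h5 := congrFun (hm k) k
            have h6 : eVec (m k) k = false := by
              simp [eVec]; exact fun h => hcase k h.symm
            have h7 : eVec k k = true := by simp [eVec]
            rw [h6] at h5
            simp only [hxk, h7] at h5
            revert h5
            cases eps k <;> simp
          set k0 : Fin n := ⟨0, by omega⟩ with hk0
          have h8 : ({k0, m k0} : Finset (Fin n)).card ≤ 2 := by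
            apply le_trans (Finset.card_insert_le _ _)
            simp
          have h9 : ((Finset.univ : Finset (Fin n)) \ {k0, m k0}).Nonempty := by
            rw [← Finset.card_pos, Finset.card_sdiff_of_subset (Finset.subset_univ _),
              Finset.card_univ, Fintype.card_fin]
            omega
          obtain ⟨j, hj'⟩ := h9
          rw [Finset.mem_sdiff] at hj'
          have hj := hj'.2
          simp only [Finset.mem_insert, Finset.mem_singleton, not_or] at hj
          have h5 := congrFun (hm k0) j
          have h6 : eVec k0 j = false := by
            simp only [eVec, decide_eq_false_iff_not]; exact hj.1
          have h7 : eVec (m k0) j = false := by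
            simp only [eVec, decide_eq_false_iff_not]; exact hj.2
          rw [h7] at h5
          simp only [hxk, h6, hepsT j] at h5
          exact absurd h5 (by simp)
      have hPIZ : ∀ j, P j = pauliI ∨ P j = pauliZ := by
        intro j
        rcases hP j with h | h | h | h
        · exact Or.inl h
        · exfalso
          have := h1 j false
          rw [heps j, h] at this
          simp [pauliX] at this
        · exfalso
          have := h1 j false
          rw [heps j, h] at this
          simp [pauliY] at this
        · exact Or.inr h
      have hxke : ∀ k, xk k = eVec k := by
        intro k
        funext j
        simp [hxk, heps j]
      have hdiagval : ∀ k, (∏ j, P j (eVec k j) (eVec k j)) = P k true true := by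
        intro k
        have hstep : (∏ j, P j (eVec k j) (eVec k j)) = P k (eVec k k) (eVec k k) := by
          apply Finset.prod_eq_single k
          · intro j _ hj
            have h6 : eVec k j = false := by
              simp only [eVec, decide_eq_false_iff_not]
              exact hj
            rw [h6]
            rcases hPIZ j with h | h <;> rw [h] <;> simp [pauliI, pauliZ]
          · intro h
            exact absurd (Finset.mem_univ k) h
        rw [hstep]
        simp [eVec]
      have hdiag : ∀ k, lam * P k true true = 1 := by
        intro k
        have h5 := hfix' (eVec k)
        rw [← hxke k] at h5
        rw [hsum k, hxke k, hdiagval k, uniformW_eVec] at h5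
        have h6 : (lam * P k true true) * c = 1 * c := by
          rw [one_mul]
          linear_combination h5
        exact mul_right_cancel₀ hc0 h6
      have hval : ∀ k, P k true true = 1 ∨ P k true true = -1 := by
        intro k
        rcases hPIZ k with h | h <;> rw [h] <;> simp [pauliI, pauliZ]
      rcases hlam with h | h | h | h
      · -- lam = 1 : identity
        left
        have hPI : ∀ k, P k = pauliI := by
          intro k
          rcases hPIZ k with h' | h'
          · exact h'
          · exfalso
            have := hdiag k
            rw [h, h'] at this
            simp [pauliZ] at this
            norm_num at this
        have : P = fun _ => pauliI := funext hPI
        rw [h, this, one_smul]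
      · -- lam = -1 : -Z
        right
        have hPZ : ∀ k, P k = pauliZ := by
          intro k
          rcases hPIZ k with h' | h'
          · exfalso
            have := hdiag k
            rw [h, h'] at this
            simp [pauliI] at this
            norm_num at this
          · exact h'
        have : P = fun _ => pauliZ := funext hPZ
        rw [h, this]
        rfl
      · exfalso
        have := hdiag ⟨0, by omega⟩
        rcases hval ⟨0, by omega⟩ with h' | h' <;> rw [h, h'] at this <;>
          simp [Complex.ext_iff] at this
      · exfalso
        have := hdiag ⟨0, by omega⟩
        rcases hval ⟨0, by omega⟩ with h' | h' <;> rw [h, h'] at this <;>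
          simp [Complex.ext_iff] at this
    · intro M hM
      rcases hM with h | h
      · rw [h]; exact memI
      · rw [h]; exact memZ
  exact ⟨hset, by rw [hset]; exact Set.ncard_pair hne⟩
end

section
/- Let n ≥ s ≥ 3 and consider the n-qubit state |ψ⟩ = |W_s⟩ ⊗ |0⟩^{⊗(n−s)} ∈ ℂ^{2^n}. Then Stab(|ψ⟩) = { I^{⊗s} ⊗ Z^{v} : v ∈ {0,1}^{n−s} } ∪ { −Z^{⊗s} ⊗ Z^{v} : v ∈ {0,1}^{n−s} }, and in particular |Stab(|ψ⟩)| = 2^{n−s+1}, so the stabilizer nullity n − log₂|Stab(|ψ⟩)| equals s − 1. -/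
open scoped Matrix

/-- The Kronecker product of vectors, identifying
`ℂ^{2^s} ⊗ ℂ^{2^m} ≅ ℂ^{2^{s+m}}` via concatenation of bitstrings. -/
def kronVec {s m : ℕ} (v : (Fin s → Bool) → ℂ) (w : (Fin m → Bool) → ℂ) :
    (Fin (s + m) → Bool) → ℂ :=
  fun x => v (fun i => x (Fin.castAdd m i)) * w (fun i => x (Fin.natAdd s i))


section Aux

open Finset

variable {s m : ℕ}

/-- distinctness of Pauli matrices -/
lemma I_ne_X : pauliI ≠ pauliX := by
  intro h
  have := congrFun (congrFun h false) false
  simp [pauliI, pauliX] at this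

lemma I_ne_Y : pauliI ≠ pauliY := by
  intro h
  have := congrFun (congrFun h false) false
  simp [pauliI, pauliY] at this

lemma Z_ne_X : pauliZ ≠ pauliX := by
  intro h
  have := congrFun (congrFun h false) false
  simp [pauliZ, pauliX] at this

lemma Z_ne_Y : pauliZ ≠ pauliY := by
  intro h
  have := congrFun (congrFun h false) false
  simp [pauliZ, pauliY] at this

lemma I_ne_Z : pauliI ≠ pauliZ := by
  intro h
  have := congrFun (congrFun h true) true
  simp [pauliI, pauliZ] at this
  norm_num at this

open Classical in
noncomputable def flipOf (Q : Matrix Bool Bool ℂ) : Bool :=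
  if Q = pauliX ∨ Q = pauliY then true else false

lemma flipOf_I : flipOf pauliI = false := by
  simp [flipOf, I_ne_X, I_ne_Y]

lemma flipOf_X : flipOf pauliX = true := by simp [flipOf]

lemma flipOf_Y : flipOf pauliY = true := by simp [flipOf]

lemma flipOf_Z : flipOf pauliZ = false := by
  simp [flipOf, Z_ne_X, Z_ne_Y]

lemma pauli_apply_ne_zero {Q : Matrix Bool Bool ℂ}
    (hQ : Q = pauliI ∨ Q = pauliX ∨ Q = pauliY ∨ Q = pauliZ) (b b' : Bool) :
    Q b b' ≠ 0 ↔ b = xor (flipOf Q) b' := by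
  rcases hQ with h | h | h | h <;> subst h <;>
    simp only [flipOf_I, flipOf_X, flipOf_Y, flipOf_Z] <;>
    cases b <;> cases b' <;>
    simp [pauliI, pauliX, pauliY, pauliZ, Complex.I_ne_zero]

lemma tensor_ne_zero_iff {n : ℕ} (P : Fin n → Matrix Bool Bool ℂ)
    (hP : ∀ j, P j = pauliI ∨ P j = pauliX ∨ P j = pauliY ∨ P j = pauliZ)
    (z y : Fin n → Bool) :
    pauliTensor P z y ≠ 0 ↔ ∀ j, z j = xor (flipOf (P j)) (y j) := by
  simp only [pauliTensor, Matrix.of_apply]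
  rw [Finset.prod_ne_zero_iff]
  constructor
  · intro h j
    exact (pauli_apply_ne_zero (hP j) _ _).1 (h j (mem_univ j))
  · intro h j _
    exact (pauli_apply_ne_zero (hP j) _ _).2 (h j)

lemma diag_offdiag {Q : Matrix Bool Bool ℂ} (hQ : Q = pauliI ∨ Q = pauliZ)
    {b b' : Bool} (h : b ≠ b') : Q b b' = 0 := by
  rcases hQ with h' | h' <;> subst h' <;> cases b <;> cases b' <;>
    simp_all [pauliI, pauliZ]

lemma diag_ff {Q : Matrix Bool Bool ℂ} (hQ : Q = pauliI ∨ Q = pauliZ) :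
    Q false false = 1 := by
  rcases hQ with h' | h' <;> subst h' <;> simp [pauliI, pauliZ]

end Aux

section Aux2
open Finset
variable {s m : ℕ}

def ehat (s m : ℕ) (k : Fin s) : Fin (s + m) → Bool :=
  Fin.append (fun i => decide (i = k)) (fun _ => false)

lemma ehat_cast (k : Fin s) (i : Fin s) :
    ehat s m k (Fin.castAdd m i) = decide (i = k) := by
  simp [ehat, Fin.append_left]

lemma ehat_nat (k : Fin s) (i : Fin m) :
    ehat s m k (Fin.natAdd s i) = false := by
  simp [ehat, Fin.append_right]

lemma ehat_inj : Function.Injective (ehat s m) := by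
  intro k k' h
  have := congrFun h (Fin.castAdd m k)
  rw [ehat_cast, ehat_cast] at this
  simpa using this.symm

lemma eq_ehat_iff {z : Fin (s + m) → Bool} {k : Fin s} :
    z = ehat s m k ↔
      ((fun i => z (Fin.castAdd m i)) = (fun i => decide (i = k)) ∧
       (fun i => z (Fin.natAdd s i)) = (fun _ : Fin m => false)) := by
  constructor
  · rintro rfl
    exact ⟨funext fun i => ehat_cast k i, funext fun i => ehat_nat k i⟩
  · rintro ⟨h1, h2⟩
    funext j
    induction j using Fin.addCases with
    | left i => rw [ehat_cast]; exact congrFun h1 i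
    | right i => rw [ehat_nat]; exact congrFun h2 i

end Aux2

section Aux3
open Finset
variable {s m : ℕ}

lemma psi_apply (z : Fin (s + m) → Bool) :
    kronVec (uniformW s) (basisState (fun _ : Fin m => false)) z =
      ((Real.sqrt s : ℝ) : ℂ)⁻¹ *
        ∑ k : Fin s, (if z = ehat s m k then 1 else 0) := by
  simp only [kronVec, uniformW, basisState]
  rw [mul_assoc]
  congr 1
  rw [Finset.sum_mul]
  refine Finset.sum_congr rfl fun k _ => ?_
  by_cases h : z = ehat s m k
  · rw [eq_ehat_iff] at h
    rw [if_pos h.1, if_pos h.2, if_pos (eq_ehat_iff.2 h)]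
    ring
  · rw [if_neg h]
    rw [eq_ehat_iff, not_and_or] at h
    rcases h with h | h
    · rw [if_neg h, zero_mul]
    · rw [if_neg h, mul_zero]

lemma sqrt_ne_zero' (hs : 1 ≤ s) : ((Real.sqrt s : ℝ) : ℂ)⁻¹ ≠ 0 := by
  have : (0:ℝ) < Real.sqrt s := Real.sqrt_pos.2 (by exact_mod_cast Nat.pos_of_ne_zero (by omega))
  simp [Complex.ofReal_ne_zero, this.ne']

lemma mulVec_eq_iff (hs : 1 ≤ s) (lam : ℂ)
    (T : Matrix (Fin (s + m) → Bool) (Fin (s + m) → Bool) ℂ) :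
    (lam • T).mulVec (kronVec (uniformW s) (basisState (fun _ : Fin m => false)))
        = kronVec (uniformW s) (basisState (fun _ : Fin m => false)) ↔
      ∀ z, lam * ∑ k : Fin s, T z (ehat s m k) =
        ∑ k : Fin s, (if z = ehat s m k then 1 else 0) := by
  rw [funext_iff]
  refine forall_congr' fun z => ?_
  have lhs : ((lam • T).mulVec
      (kronVec (uniformW s) (basisState (fun _ : Fin m => false)))) z =
      ((Real.sqrt s : ℝ) : ℂ)⁻¹ * (lam * ∑ k : Fin s, T z (ehat s m k)) := by
    simp only [Matrix.mulVec, dotProduct, Matrix.smul_apply, smul_eq_mul]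
    calc ∑ y, lam * T z y *
          (kronVec (uniformW s) (basisState (fun _ : Fin m => false)) y)
        = ∑ y, ∑ k : Fin s, ((Real.sqrt s : ℝ) : ℂ)⁻¹ *
            (lam * (T z y * (if y = ehat s m k then 1 else 0))) := by
          refine Finset.sum_congr rfl fun y _ => ?_
          rw [psi_apply, Finset.mul_sum, Finset.mul_sum]
          exact Finset.sum_congr rfl fun k _ => by ring
      _ = ∑ k : Fin s, ∑ y, ((Real.sqrt s : ℝ) : ℂ)⁻¹ *
            (lam * (T z y * (if y = ehat s m k then 1 else 0))) :=
          Finset.sum_comm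
      _ = ∑ k : Fin s, ((Real.sqrt s : ℝ) : ℂ)⁻¹ * (lam * T z (ehat s m k)) := by
          refine Finset.sum_congr rfl fun k _ => ?_
          simp [mul_ite, mul_one, mul_zero, Finset.sum_ite_eq']
      _ = ((Real.sqrt s : ℝ) : ℂ)⁻¹ * (lam * ∑ k : Fin s, T z (ehat s m k)) := by
          rw [Finset.mul_sum, Finset.mul_sum]
  rw [lhs, psi_apply]
  exact mul_right_inj' (sqrt_ne_zero' hs)

end Aux3

section Aux4
open Finset
variable {s m : ℕ}

lemma if_pauli_diag_ff (b : Bool) :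
    (if b then pauliZ else pauliI) false false = 1 := by
  cases b <;> simp [pauliI, pauliZ]

lemma pauliI_diag (b : Bool) : pauliI b b = 1 := by cases b <;> simp [pauliI]

lemma pauliZ_diag (b : Bool) : pauliZ b b = if b then -1 else 1 := by
  cases b <;> simp [pauliZ]

lemma tensor_diag_eq_zero {n : ℕ} (P : Fin n → Matrix Bool Bool ℂ)
    (hP : ∀ j, P j = pauliI ∨ P j = pauliZ) {z y : Fin n → Bool} (h : z ≠ y) :
    pauliTensor P z y = 0 := by
  obtain ⟨j, hj⟩ := Function.ne_iff.1 h
  simp only [pauliTensor, Matrix.of_apply]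
  exact Finset.prod_eq_zero (Finset.mem_univ j) (diag_offdiag (hP j) hj)

lemma hdiagA (v : Fin m → Bool) : ∀ j,
    (Fin.append (fun _ : Fin s => pauliI) (fun j => if v j then pauliZ else pauliI)) j
      = pauliI ∨
    (Fin.append (fun _ : Fin s => pauliI) (fun j => if v j then pauliZ else pauliI)) j
      = pauliZ := by
  intro j
  induction j using Fin.addCases with
  | left i => rw [Fin.append_left]; exact Or.inl rfl
  | right i => rw [Fin.append_right]; cases v i <;> simp

lemma hdiagB (v : Fin m → Bool) : ∀ j,
    (Fin.append (fun _ : Fin s => pauliZ) (fun j => if v j then pauliZ else pauliI)) j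
      = pauliI ∨
    (Fin.append (fun _ : Fin s => pauliZ) (fun j => if v j then pauliZ else pauliI)) j
      = pauliZ := by
  intro j
  induction j using Fin.addCases with
  | left i => rw [Fin.append_left]; exact Or.inr rfl
  | right i => rw [Fin.append_right]; cases v i <;> simp

lemma tensorI_val (v : Fin m → Bool) (k : Fin s) :
    pauliTensor (Fin.append (fun _ : Fin s => pauliI)
      (fun j => if v j then pauliZ else pauliI)) (ehat s m k) (ehat s m k) = 1 := by
  simp only [pauliTensor, Matrix.of_apply]
  refine Finset.prod_eq_one fun j _ => ?_
  induction j using Fin.addCases with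
  | left i => rw [Fin.append_left, ehat_cast]; exact pauliI_diag _
  | right i => rw [Fin.append_right, ehat_nat]; exact if_pauli_diag_ff _

lemma tensorZ_val (v : Fin m → Bool) (k : Fin s) :
    pauliTensor (Fin.append (fun _ : Fin s => pauliZ)
      (fun j => if v j then pauliZ else pauliI)) (ehat s m k) (ehat s m k) = -1 := by
  simp only [pauliTensor, Matrix.of_apply]
  rw [Fin.prod_univ_add]
  simp only [Fin.append_left, Fin.append_right, ehat_cast, ehat_nat,
    if_pauli_diag_ff, Finset.prod_const_one, mul_one, pauliZ_diag]
  simp [Finset.prod_ite_eq']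

lemma memA (hs : 1 ≤ s) (v : Fin m → Bool) :
    pauliTensor (Fin.append (fun _ : Fin s => pauliI)
        (fun j => if v j then pauliZ else pauliI))
      ∈ Stab (kronVec (uniformW s) (basisState (fun _ : Fin m => false))) := by
  constructor
  · refine ⟨1, _, Or.inl rfl, fun j => ?_, (one_smul _ _).symm⟩
    rcases hdiagA v j with h | h
    · exact Or.inl h
    · exact Or.inr (Or.inr (Or.inr h))
  · rw [show pauliTensor (Fin.append (fun _ : Fin s => pauliI)
        (fun j => if v j then pauliZ else pauliI)) = (1:ℂ) • _ from (one_smul _ _).symm,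
      mulVec_eq_iff hs]
    intro z
    rw [one_mul]
    refine Finset.sum_congr rfl fun k _ => ?_
    by_cases h : z = ehat s m k
    · subst h; rw [if_pos rfl, tensorI_val]
    · rw [if_neg h, tensor_diag_eq_zero _ (hdiagA v) h]

lemma memB (hs : 1 ≤ s) (v : Fin m → Bool) :
    (-1 : ℂ) • pauliTensor (Fin.append (fun _ : Fin s => pauliZ)
        (fun j => if v j then pauliZ else pauliI))
      ∈ Stab (kronVec (uniformW s) (basisState (fun _ : Fin m => false))) := by
  constructor
  · refine ⟨-1, _, Or.inr (Or.inl rfl), fun j => ?_, rfl⟩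
    rcases hdiagB v j with h | h
    · exact Or.inl h
    · exact Or.inr (Or.inr (Or.inr h))
  · rw [mulVec_eq_iff hs]
    intro z
    rw [Finset.mul_sum]
    refine Finset.sum_congr rfl fun k _ => ?_
    by_cases h : z = ehat s m k
    · subst h; rw [if_pos rfl, tensorZ_val]; norm_num
    · rw [if_neg h, tensor_diag_eq_zero _ (hdiagB v) h, mul_zero]

end Aux4

section Aux5
open Finset
variable {s m : ℕ}

lemma flipOf_false {Q : Matrix Bool Bool ℂ}
    (hQ : Q = pauliI ∨ Q = pauliX ∨ Q = pauliY ∨ Q = pauliZ)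
    (h : flipOf Q = false) : Q = pauliI ∨ Q = pauliZ := by
  rcases hQ with h' | h' | h' | h' <;> subst h'
  · exact Or.inl rfl
  · rw [flipOf_X] at h; exact absurd h (by simp)
  · rw [flipOf_Y] at h; exact absurd h (by simp)
  · exact Or.inr rfl

lemma stab_subset (hs : 3 ≤ s) :
    Stab (kronVec (uniformW s) (basisState (fun _ : Fin m => false))) ⊆
      (Set.range (fun v : Fin m → Bool =>
        pauliTensor (Fin.append (fun _ : Fin s => pauliI)
          (fun j => if v j then pauliZ else pauliI)))) ∪
      (Set.range (fun v : Fin m → Bool =>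
        (-1 : ℂ) • pauliTensor (Fin.append (fun _ : Fin s => pauliZ)
          (fun j => if v j then pauliZ else pauliI)))) := by
  classical
  rintro M ⟨⟨lam, P, hlam, hP, rfl⟩, hfix⟩
  rw [mulVec_eq_iff (by omega) lam] at hfix
  have hlam0 : lam ≠ 0 := by
    rcases hlam with rfl | rfl | rfl | rfl <;> simp [Complex.I_ne_zero]
  have hC : ∀ k : Fin s, ∃ k' : Fin s,
      (fun j => xor (flipOf (P j)) (ehat s m k j)) = ehat s m k' := by
    intro k
    have h := hfix (fun j => xor (flipOf (P j)) (ehat s m k j))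
    have hnz : pauliTensor P (fun j => xor (flipOf (P j)) (ehat s m k j))
        (ehat s m k) ≠ 0 := by
      rw [tensor_ne_zero_iff P hP]
      intro j; rfl
    have hzero : ∀ k'' : Fin s, k'' ≠ k →
        pauliTensor P (fun j => xor (flipOf (P j)) (ehat s m k j))
          (ehat s m k'') = 0 := by
      intro k'' hne
      by_contra h0
      replace h0 := (tensor_ne_zero_iff P hP _ _).1 h0
      apply hne
      apply ehat_inj (s := s) (m := m)
      funext j
      have e := h0 j
      cases hf : flipOf (P j) <;> rw [hf] at e <;> simpa using e.symm
    have hsum : ∑ k'' : Fin s, pauliTensor P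
        (fun j => xor (flipOf (P j)) (ehat s m k j)) (ehat s m k'') =
        pauliTensor P (fun j => xor (flipOf (P j)) (ehat s m k j)) (ehat s m k) :=
      Finset.sum_eq_single k (fun b _ hb => hzero b hb) (by simp)
    rw [hsum] at h
    by_contra hno
    push_neg at hno
    have hz : ∑ k' : Fin s, (if (fun j => xor (flipOf (P j)) (ehat s m k j))
        = ehat s m k' then (1:ℂ) else 0) = 0 :=
      Finset.sum_eq_zero fun k' _ => if_neg (hno k')
    rw [hz] at h
    exact mul_ne_zero hlam0 hnz h
  have htail : ∀ j : Fin m, flipOf (P (Fin.natAdd s j)) = false := by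
    obtain ⟨k', hk'⟩ := hC ⟨0, by omega⟩
    intro j
    have e := congrFun hk' (Fin.natAdd s j)
    simpa [ehat_nat] using e
  have hhead : ∀ i : Fin s, flipOf (P (Fin.castAdd m i)) = false := by
    by_contra hcon
    push_neg at hcon
    obtain ⟨k1, hk1⟩ := hcon
    have hk1' : flipOf (P (Fin.castAdd m k1)) = true := by
      revert hk1; cases flipOf (P (Fin.castAdd m k1)) <;> simp
    obtain ⟨k', hk'⟩ := hC k1
    have e1 := congrFun hk' (Fin.castAdd m k1)
    simp only [ehat_cast, hk1'] at e1
    have hne : k1 ≠ k' := by simpa using e1.symm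
    have e2 := congrFun hk' (Fin.castAdd m k')
    simp only [ehat_cast] at e2
    have hflipk' : flipOf (P (Fin.castAdd m k')) = true := by
      simpa [(Ne.symm hne : k' ≠ k1)] using e2
    obtain ⟨k2, hk2⟩ : ∃ k2 : Fin s, k2 ∉ ({k1, k'} : Finset (Fin s)) := by
      by_contra hall
      push_neg at hall
      have h1 : ({k1, k'} : Finset (Fin s)).card ≤ 2 :=
        (Finset.card_insert_le _ _).trans (by simp)
      rw [Finset.eq_univ_iff_forall.2 hall, Finset.card_univ, Fintype.card_fin] at h1
      omega
    simp only [Finset.mem_insert, Finset.mem_singleton, not_or] at hk2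
    obtain ⟨hk21, hk2'⟩ := hk2
    obtain ⟨k'', hk''⟩ := hC k2
    have f1 := congrFun hk'' (Fin.castAdd m k1)
    simp only [ehat_cast, hk1'] at f1
    have g1 : k1 = k'' := by simpa [(Ne.symm hk21 : k1 ≠ k2)] using f1
    have f2 := congrFun hk'' (Fin.castAdd m k')
    simp only [ehat_cast, hflipk'] at f2
    have g2 : k' = k'' := by simpa [(Ne.symm hk2' : k' ≠ k2)] using f2
    exact hne (g1.trans g2.symm)
  have hflip : ∀ j, flipOf (P j) = false := fun j => Fin.addCases hhead htail j
  have hdiag : ∀ j, P j = pauliI ∨ P j = pauliZ := fun j => flipOf_false (hP j) (hflip j)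
  have hval : ∀ k : Fin s, lam * (P (Fin.castAdd m k) true true) = 1 := by
    intro k
    have h := hfix (ehat s m k)
    have hsum1 : ∑ k'' : Fin s, pauliTensor P (ehat s m k) (ehat s m k'') =
        pauliTensor P (ehat s m k) (ehat s m k) :=
      Finset.sum_eq_single k
        (fun b _ hb => tensor_diag_eq_zero P hdiag (fun he => hb ((ehat_inj he).symm)))
        (by simp)
    have hsum2 : ∑ k' : Fin s,
        (if ehat s m k = ehat s m k' then (1:ℂ) else 0) = 1 := by
      rw [Finset.sum_eq_single k
        (fun b _ hb => if_neg fun he => hb ((ehat_inj he).symm)) (by simp)]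
      rw [if_pos rfl]
    rw [hsum1, hsum2] at h
    have hprod : pauliTensor P (ehat s m k) (ehat s m k) =
        P (Fin.castAdd m k) true true := by
      simp only [pauliTensor, Matrix.of_apply]
      rw [Fin.prod_univ_add]
      have h2 : (∏ i : Fin m, P (Fin.natAdd s i) (ehat s m k (Fin.natAdd s i))
          (ehat s m k (Fin.natAdd s i))) = 1 :=
        Finset.prod_eq_one fun i _ => by rw [ehat_nat]; exact diag_ff (hdiag _)
      rw [h2, mul_one]
      rw [Finset.prod_eq_single k]
      · rw [ehat_cast]; simp
      · intro i _ hne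
        rw [ehat_cast]
        have hd : decide (i = k) = false := by simp [hne]
        rw [hd]; exact diag_ff (hdiag _)
      · simp
    rw [hprod] at h
    exact h
  have hk0 : (0 : ℕ) < s := by omega
  rcases hdiag (Fin.castAdd m ⟨0, hk0⟩) with hI | hZ
  · have hlam1 : lam = 1 := by
      have h := hval ⟨0, hk0⟩
      rw [hI] at h
      simpa [pauliI] using h
    have hheadI : ∀ k : Fin s, P (Fin.castAdd m k) = pauliI := by
      intro k
      rcases hdiag (Fin.castAdd m k) with h | h
      · exact h
      · exfalso
        have hv := hval k
        rw [h, hlam1] at hv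
        simp [pauliZ] at hv
        exact absurd hv (by norm_num)
    left
    refine ⟨fun j => decide (P (Fin.natAdd s j) = pauliZ), ?_⟩
    have hPeq : Fin.append (fun _ : Fin s => pauliI)
        (fun j => if decide (P (Fin.natAdd s j) = pauliZ) then pauliZ else pauliI)
        = P := by
      funext j
      induction j using Fin.addCases with
      | left i => rw [Fin.append_left, hheadI]
      | right i =>
        rw [Fin.append_right]
        rcases hdiag (Fin.natAdd s i) with h | h
        · rw [h]; simp [I_ne_Z]
        · rw [h]; simp
    show pauliTensor _ = lam • pauliTensor P
    rw [hPeq, hlam1, one_smul]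
  · have hlamm : lam = -1 := by
      have h := hval ⟨0, hk0⟩
      rw [hZ] at h
      have hz : pauliZ true true = -1 := by simp [pauliZ]
      rw [hz] at h
      linear_combination -h
    have hheadZ : ∀ k : Fin s, P (Fin.castAdd m k) = pauliZ := by
      intro k
      rcases hdiag (Fin.castAdd m k) with h | h
      · exfalso
        have hv := hval k
        rw [h, hlamm] at hv
        simp [pauliI] at hv
        exact absurd hv (by norm_num)
      · exact h
    right
    refine ⟨fun j => decide (P (Fin.natAdd s j) = pauliZ), ?_⟩
    have hPeq : Fin.append (fun _ : Fin s => pauliZ)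
        (fun j => if decide (P (Fin.natAdd s j) = pauliZ) then pauliZ else pauliI)
        = P := by
      funext j
      induction j using Fin.addCases with
      | left i => rw [Fin.append_left, hheadZ]
      | right i =>
        rw [Fin.append_right]
        rcases hdiag (Fin.natAdd s i) with h | h
        · rw [h]; simp [I_ne_Z]
        · rw [h]; simp
    show (-1 : ℂ) • pauliTensor _ = lam • pauliTensor P
    rw [hPeq, hlamm]

end Aux5

section Aux6
open Finset
variable {s m : ℕ}

def tb (s m : ℕ) (j : Fin m) : Fin (s + m) → Bool :=
  Fin.append (fun _ => false) (fun i => decide (i = j))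

lemma tb_cast (j : Fin m) (i : Fin s) : tb s m j (Fin.castAdd m i) = false := by
  simp [tb, Fin.append_left]

lemma tb_nat (j : Fin m) (i : Fin m) :
    tb s m j (Fin.natAdd s i) = decide (i = j) := by
  simp [tb, Fin.append_right]

lemma tensor_tb_val (A : Fin s → Matrix Bool Bool ℂ)
    (hA : ∀ i, A i false false = 1) (v : Fin m → Bool) (j : Fin m) :
    pauliTensor (Fin.append A (fun i => if v i then pauliZ else pauliI))
      (tb s m j) (tb s m j) = if v j then -1 else 1 := by
  simp only [pauliTensor, Matrix.of_apply]
  rw [Fin.prod_univ_add]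
  simp only [Fin.append_left, Fin.append_right, tb_cast, tb_nat, hA,
    Finset.prod_const_one, one_mul]
  rw [Finset.prod_eq_single j]
  · have : decide (j = j) = true := by simp
    rw [this]
    cases v j <;> simp [pauliZ, pauliI]
  · intro i _ hne
    have hd : decide (i = j) = false := by simp [hne]
    rw [hd]
    exact if_pauli_diag_ff _
  · simp

lemma tensor_zero_val {n : ℕ} (P : Fin n → Matrix Bool Bool ℂ)
    (hP : ∀ j, P j false false = 1) :
    pauliTensor P (fun _ => false) (fun _ => false) = 1 := by
  simp only [pauliTensor, Matrix.of_apply]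
  exact Finset.prod_eq_one fun j _ => hP j

lemma append_ff_one (A : Fin s → Matrix Bool Bool ℂ)
    (hA : ∀ i, A i false false = 1) (v : Fin m → Bool) :
    ∀ j, (Fin.append A (fun i => if v i then pauliZ else pauliI)) j false false = 1 := by
  intro j
  induction j using Fin.addCases with
  | left i => rw [Fin.append_left]; exact hA i
  | right i => rw [Fin.append_right]; exact if_pauli_diag_ff _

lemma injA (v v' : Fin m → Bool)
    (h : pauliTensor (Fin.append (fun _ : Fin s => pauliI)
          (fun j => if v j then pauliZ else pauliI)) =
        pauliTensor (Fin.append (fun _ : Fin s => pauliI)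
          (fun j => if v' j then pauliZ else pauliI))) : v = v' := by
  funext j
  have e := congrFun (congrFun h (tb s m j)) (tb s m j)
  rw [tensor_tb_val (fun _ => pauliI) (fun i => pauliI_diag false) v j,
    tensor_tb_val (fun _ => pauliI) (fun i => pauliI_diag false) v' j] at e
  cases hv : v j <;> cases hv' : v' j <;> rw [hv, hv'] at e <;>
    first | rfl | (exfalso; norm_num at e)

lemma injB (v v' : Fin m → Bool)
    (h : (-1:ℂ) • pauliTensor (Fin.append (fun _ : Fin s => pauliZ)
          (fun j => if v j then pauliZ else pauliI)) =
        (-1:ℂ) • pauliTensor (Fin.append (fun _ : Fin s => pauliZ)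
          (fun j => if v' j then pauliZ else pauliI))) : v = v' := by
  have hZff : pauliZ false false = 1 := by simp [pauliZ]
  funext j
  have e := congrFun (congrFun h (tb s m j)) (tb s m j)
  simp only [Matrix.smul_apply, smul_eq_mul] at e
  rw [tensor_tb_val (fun _ => pauliZ) (fun i => hZff) v j,
    tensor_tb_val (fun _ => pauliZ) (fun i => hZff) v' j] at e
  have e' := mul_left_cancel₀ (by norm_num : (-1:ℂ) ≠ 0) e
  cases hv : v j <;> cases hv' : v' j <;> rw [hv, hv'] at e' <;>
    first | rfl | (exfalso; norm_num at e')

lemma AB_ne (v w : Fin m → Bool) :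
    pauliTensor (Fin.append (fun _ : Fin s => pauliI)
        (fun j => if v j then pauliZ else pauliI)) ≠
    (-1:ℂ) • pauliTensor (Fin.append (fun _ : Fin s => pauliZ)
        (fun j => if w j then pauliZ else pauliI)) := by
  intro h
  have hZff : pauliZ false false = 1 := by simp [pauliZ]
  have e := congrFun (congrFun h (fun _ => false)) (fun _ => false)
  rw [tensor_zero_val _ (append_ff_one (fun _ => pauliI) (fun i => pauliI_diag false) v),
    Matrix.smul_apply,
    tensor_zero_val _ (append_ff_one (fun _ => pauliZ) (fun i => hZff) w),
    smul_eq_mul, mul_one] at e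
  norm_num at e

end Aux6

/-- For `n = s + m ≥ s ≥ 3`, the stabilizer group of
`|W_s⟩ ⊗ |0⟩^{⊗(n-s)}` is
`{ I^{⊗s} ⊗ Z^v : v } ∪ { -Z^{⊗s} ⊗ Z^v : v }`, it has `2^{n-s+1}` elements,
and the stabilizer nullity `n - log₂|Stab|` equals `s - 1`. -/
theorem stab_W_tensor_zeros (s m : ℕ) (hs : 3 ≤ s) :
    Stab (kronVec (uniformW s) (basisState (fun _ : Fin m => false))) =
      (Set.range (fun v : Fin m → Bool =>
        pauliTensor (Fin.append (fun _ : Fin s => pauliI)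
          (fun j => if v j then pauliZ else pauliI)))) ∪
      (Set.range (fun v : Fin m → Bool =>
        (-1 : ℂ) • pauliTensor (Fin.append (fun _ : Fin s => pauliZ)
          (fun j => if v j then pauliZ else pauliI)))) ∧
    (Stab (kronVec (uniformW s)
        (basisState (fun _ : Fin m => false)))).ncard = 2 ^ (m + 1) ∧
    (s + m) - Nat.log 2 ((Stab (kronVec (uniformW s)
        (basisState (fun _ : Fin m => false)))).ncard) = s - 1 := by
  have hseteq : Stab (kronVec (uniformW s) (basisState (fun _ : Fin m => false))) =
      (Set.range (fun v : Fin m → Bool =>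
        pauliTensor (Fin.append (fun _ : Fin s => pauliI)
          (fun j => if v j then pauliZ else pauliI)))) ∪
      (Set.range (fun v : Fin m → Bool =>
        (-1 : ℂ) • pauliTensor (Fin.append (fun _ : Fin s => pauliZ)
          (fun j => if v j then pauliZ else pauliI)))) := by
    refine Set.Subset.antisymm (stab_subset hs) ?_
    rintro M (⟨v, rfl⟩ | ⟨v, rfl⟩)
    · exact memA (by omega) v
    · exact memB (by omega) v
  have hcard2 : Fintype.card (Fin m → Bool) = 2 ^ m := by
    simp [Fintype.card_fun]
  have hcardA : (Set.range (fun v : Fin m → Bool =>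
      pauliTensor (Fin.append (fun _ : Fin s => pauliI)
        (fun j => if v j then pauliZ else pauliI)))).ncard = 2 ^ m := by
    rw [← Nat.card_coe_set_eq,
      Nat.card_range_of_injective (fun v v' h => injA v v' h),
      Nat.card_eq_fintype_card, hcard2]
  have hcardB : (Set.range (fun v : Fin m → Bool =>
      (-1 : ℂ) • pauliTensor (Fin.append (fun _ : Fin s => pauliZ)
        (fun j => if v j then pauliZ else pauliI)))).ncard = 2 ^ m := by
    rw [← Nat.card_coe_set_eq,
      Nat.card_range_of_injective (fun v v' h => injB v v' h),
      Nat.card_eq_fintype_card, hcard2]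
  have hdisj : Disjoint (Set.range (fun v : Fin m → Bool =>
      pauliTensor (Fin.append (fun _ : Fin s => pauliI)
        (fun j => if v j then pauliZ else pauliI))))
      (Set.range (fun v : Fin m → Bool =>
        (-1 : ℂ) • pauliTensor (Fin.append (fun _ : Fin s => pauliZ)
          (fun j => if v j then pauliZ else pauliI)))) := by
    rw [Set.disjoint_left]
    rintro x ⟨v, rfl⟩ ⟨w, hw⟩
    exact AB_ne v w hw.symm
  have hcard : (Stab (kronVec (uniformW s)
      (basisState (fun _ : Fin m => false)))).ncard = 2 ^ (m + 1) := by
    rw [hseteq, Set.ncard_union_eq hdisj (Set.finite_range _) (Set.finite_range _),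
      hcardA, hcardB, pow_succ, mul_two]
  have hlog : Nat.log 2 (2 ^ (m + 1)) = m + 1 := Nat.log_pow (by norm_num) (m + 1)
  refine ⟨hseteq, hcard, ?_⟩
  rw [hcard, hlog]
  clear hseteq hcard2 hcardA hcardB hdisj hcard hlog
  omega
end

section
/- Let n ≥ 1 and let |ψ⟩ = Σ_{x ∈ {0,1}^n} α_x |x⟩ be a unit vector in ℂ^{2^n} whose coefficients satisfy: α_x ≥ 0 for all x, α_x ≠ 0 whenever the Hamming weight |x| of x is at most 1, and α_x ≠ α_y whenever x ≠ y. Then the stabilizer group of |ψ⟩ consists only of the identity Pauli string I^{⊗n} (with phase 1). -/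
open scoped Matrix

lemma pauli_entry (Q : Matrix Bool Bool ℂ)
    (h : Q = pauliI ∨ Q = pauliX ∨ Q = pauliY ∨ Q = pauliZ) :
    ∃ (b : Bool) (c : Bool → ℂ),
      (∀ a a', Q a a' = if a' = xor a b then c a else 0) ∧
      (∀ a, c a = 1 ∨ c a = -1 ∨ c a = Complex.I ∨ c a = -Complex.I) ∧
      (b = false → c false = 1) ∧
      (b = false → c true = 1 → Q = pauliI) := by
  rcases h with h|h|h|h <;> subst h
  · exact ⟨false, fun _ => 1, by intro a a'; cases a <;> cases a' <;> simp [pauliI],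
      fun a => Or.inl rfl, fun _ => rfl, fun _ _ => rfl⟩
  · refine ⟨true, fun _ => 1, ?_, fun a => Or.inl rfl, by simp, by simp⟩
    intro a a'; cases a <;> cases a' <;> simp [pauliX]
  · refine ⟨true, fun a => if a then Complex.I else -Complex.I, ?_, ?_, by simp, by simp⟩
    · intro a a'; cases a <;> cases a' <;> simp [pauliY]
    · intro a; cases a <;> simp
  · refine ⟨false, fun a => if a then -1 else 1, ?_, ?_, by simp, ?_⟩
    · intro a a'; cases a <;> cases a' <;> simp [pauliZ]
    · intro a; cases a <;> simp
    · intro _ h; exfalso; norm_num at h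

lemma phase_mul {z w : ℂ}
    (hz : z = 1 ∨ z = -1 ∨ z = Complex.I ∨ z = -Complex.I)
    (hw : w = 1 ∨ w = -1 ∨ w = Complex.I ∨ w = -Complex.I) :
    z * w = 1 ∨ z * w = -1 ∨ z * w = Complex.I ∨ z * w = -Complex.I := by
  rcases hz with h|h|h|h <;> rcases hw with h'|h'|h'|h' <;> subst h <;> subst h' <;>
    simp [Complex.I_mul_I]

lemma phase_prod {ι : Type*} (s : Finset ι) (f : ι → ℂ)
    (h : ∀ i ∈ s, f i = 1 ∨ f i = -1 ∨ f i = Complex.I ∨ f i = -Complex.I) :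
    (∏ i ∈ s, f i) = 1 ∨ (∏ i ∈ s, f i) = -1 ∨
      (∏ i ∈ s, f i) = Complex.I ∨ (∏ i ∈ s, f i) = -Complex.I := by
  classical
  induction s using Finset.induction_on with
  | empty => simp
  | @insert a s hnotmem ih =>
    rw [Finset.prod_insert hnotmem]
    exact phase_mul (h a (Finset.mem_insert_self a s))
      (ih fun i hi => h i (Finset.mem_insert_of_mem hi))

/-- If `|ψ⟩ = Σ_x α_x |x⟩` is a unit vector with
nonnegative real coefficients that are pairwise distinct and nonzero on all
bitstrings of Hamming weight at most `1`, then its stabilizer group contains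
only the identity Pauli string. -/
theorem stab_trivial_of_distinct_coeffs
    (n : ℕ) (hn : 1 ≤ n) (α : (Fin n → Bool) → ℝ)
    (hnonneg : ∀ x, 0 ≤ α x)
    (hlow : ∀ x : Fin n → Bool,
      (Finset.univ.filter (fun i => x i = true)).card ≤ 1 → α x ≠ 0)
    (hinj : Function.Injective α)
    (hunit : ∑ x : Fin n → Bool, (α x) ^ 2 = 1) :
    Stab (fun x => (α x : ℂ)) = {pauliTensor (fun _ : Fin n => pauliI)} := by
  classical
  have hIdone : pauliTensor (fun _ : Fin n => pauliI) =
      (1 : Matrix (Fin n → Bool) (Fin n → Bool) ℂ) := by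
    ext x y
    by_cases hxy : x = y
    · subst hxy; simp [pauliTensor, pauliI, Matrix.one_apply]
    · have : ∃ j, x j ≠ y j := by
        by_contra hc
        push_neg at hc
        exact hxy (funext hc)
      obtain ⟨j, hj⟩ := this
      simp only [pauliTensor, Matrix.of_apply, Matrix.one_apply, if_neg hxy]
      exact Finset.prod_eq_zero (Finset.mem_univ j) (by simp [pauliI, hj])
  ext M
  simp only [Set.mem_singleton_iff]
  constructor
  · rintro ⟨⟨lam, P, hlam, hP, rfl⟩, hstab⟩
    -- extract bit-flip and phase data for each P j
    choose b c hentry hcval hcfalse hcI using fun j => pauli_entry (P j) (hP j)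
    -- the key pointwise equation
    have key : ∀ y : Fin n → Bool,
        lam * (∏ j, c j (y j)) * (α (fun j => xor (y j) (b j)) : ℂ) = α y := by
      intro y
      have := congrFun hstab y
      rw [Matrix.smul_mulVec] at this
      simp only [Pi.smul_apply, Matrix.mulVec, dotProduct, smul_eq_mul] at this
      rw [← this]
      have hprod : ∀ x : Fin n → Bool,
          (pauliTensor P) y x =
            if x = (fun j => xor (y j) (b j)) then (∏ j, c j (y j)) else 0 := by
        intro x
        by_cases hx : x = fun j => xor (y j) (b j)
        · subst hx
          simp only [pauliTensor, Matrix.of_apply, if_pos rfl]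
          refine Finset.prod_congr rfl fun j _ => ?_
          rw [hentry j]
          simp
        · have : ∃ j, x j ≠ xor (y j) (b j) := by
            by_contra hc
            push_neg at hc
            exact hx (funext hc)
          obtain ⟨j, hj⟩ := this
          simp only [pauliTensor, Matrix.of_apply, if_neg hx]
          refine Finset.prod_eq_zero (Finset.mem_univ j) ?_
          rw [hentry j, if_neg hj]
      have : ∑ x : Fin n → Bool, (pauliTensor P) y x * (α x : ℂ) =
          (∏ j, c j (y j)) * (α (fun j => xor (y j) (b j)) : ℂ) := by
        rw [Finset.sum_congr rfl fun x _ => by rw [hprod x]]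
        simp only [ite_mul, zero_mul]
        rw [Finset.sum_ite_eq' Finset.univ (fun j => xor (y j) (b j))
          (fun x => (∏ j, c j (y j)) * (α x : ℂ))]
        simp
      rw [this]; ring
    -- the all-zero string
    set y0 : Fin n → Bool := fun _ => false with hy0
    have hy0card : (Finset.univ.filter (fun i => y0 i = true)).card ≤ 1 := by
      simp [hy0]
    have hα0 : α y0 ≠ 0 := hlow y0 hy0card
    have hα0pos : 0 < α y0 := lt_of_le_of_ne (hnonneg y0) (Ne.symm hα0)
    -- phase at y0
    have hmu : lam * (∏ j, c j (y0 j)) = 1 ∨ lam * (∏ j, c j (y0 j)) = -1 ∨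
        lam * (∏ j, c j (y0 j)) = Complex.I ∨ lam * (∏ j, c j (y0 j)) = -Complex.I :=
      phase_mul hlam (phase_prod _ _ fun j _ => hcval j (y0 j))
    have key0 := key y0
    have hb0 : (fun j => xor (y0 j) (b j)) = b := by
      funext j; simp [hy0]
    rw [hb0] at key0
    -- show b = y0
    have hbeq : b = y0 := by
      rcases hmu with h|h|h|h <;> rw [h] at key0
      · rw [one_mul] at key0
        exact hinj (by exact_mod_cast key0)
      · exfalso
        have : ((-(α b) : ℝ) : ℂ) = (α y0 : ℂ) := by push_cast; linear_combination key0
        have := Complex.ofReal_inj.mp this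
        have hbnn := hnonneg b
        linarith
      · exfalso
        have him := congrArg Complex.im key0
        simp [Complex.mul_im] at him
        rw [him] at key0
        simp at key0
        exact hα0 (by exact_mod_cast key0.symm)
      · exfalso
        have him := congrArg Complex.im key0
        simp [Complex.mul_im] at him
        rw [him] at key0
        simp at key0
        exact hα0 (by exact_mod_cast key0.symm)
    have hbfalse : ∀ j, b j = false := fun j => congrFun hbeq j
    -- c j false = 1 for all j
    have hc1 : ∀ j, c j false = 1 := fun j => hcfalse j (hbfalse j)
    -- lam = 1
    have hprod0 : (∏ j, c j (y0 j)) = 1 := by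
      rw [Finset.prod_eq_one fun j _ => by rw [show y0 j = false from rfl, hc1 j]]
    have hlam1 : lam = 1 := by
      rw [hbeq, hprod0, mul_one] at key0
      have h0C : (α y0 : ℂ) ≠ 0 := by exact_mod_cast hα0
      exact mul_right_cancel₀ h0C (key0.trans (one_mul ((α y0 : ℂ))).symm)
    -- each P k = pauliI
    have hPI : ∀ k, P k = pauliI := by
      intro k
      set yk : Fin n → Bool := fun i => decide (i = k) with hyk
      have hykcard : (Finset.univ.filter (fun i => yk i = true)).card ≤ 1 := by
        have : (Finset.univ.filter (fun i => yk i = true)) = {k} := by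
          ext i; simp [hyk]
        rw [this]; simp
      have hαk : α yk ≠ 0 := hlow yk hykcard
      have keyk := key yk
      have hbk : (fun j => xor (yk j) (b j)) = yk := by
        funext j; simp [hbfalse j]
      rw [hbk, hlam1, one_mul] at keyk
      have hprodk : (∏ j, c j (yk j)) = c k true := by
        rw [Finset.prod_eq_single k]
        · simp [hyk]
        · intro j _ hj
          have : yk j = false := by simp [hyk, hj]
          rw [this, hc1 j]
        · intro h; exact absurd (Finset.mem_univ k) h
      rw [hprodk] at keyk
      have hαkC : (α yk : ℂ) ≠ 0 := by exact_mod_cast hαk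
      have : c k true = 1 := by
        have := mul_right_cancel₀ hαkC (keyk.trans (one_mul (α yk : ℂ)).symm)
        exact this
      exact hcI k (hbfalse k) this
    have : P = fun _ => pauliI := funext hPI
    rw [this, hlam1, one_smul]
  · rintro rfl
    refine ⟨⟨1, fun _ => pauliI, Or.inl rfl, fun _ => Or.inl rfl, (one_smul _ _).symm⟩, ?_⟩
    rw [hIdone, Matrix.one_mulVec]
end

section
/- Let m ≥ 1 and let U be an m×m unit upper-triangular matrix over 𝔽₂ (U_{ii} = 1 for all i, and U_{ij} = 0 for i > j). Then there exists a sequence of at most 2m parallel rounds of row additions transforming U into the identity matrix, where a parallel round is a finite set of ordered pairs (i,j) of row indices, all indices appearing in the round being pairwise distinct, and applying the round replaces row j by row j + row i (mod 2) simultaneously for every pair (i,j) in the set. -/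
/-- A parallel round of row additions: a finite set of ordered pairs `(i, j)`
(meaning "add row `i` to row `j`") in which all appearing indices are pairwise
distinct. -/
def ValidRound {m : ℕ} (R : Finset (Fin m × Fin m)) : Prop :=
  (∀ p ∈ R, p.1 ≠ p.2) ∧
  ∀ p ∈ R, ∀ q ∈ R, p ≠ q →
    p.1 ≠ q.1 ∧ p.1 ≠ q.2 ∧ p.2 ≠ q.1 ∧ p.2 ≠ q.2

/-- Apply a parallel round of row additions to a matrix over `𝔽₂`:
simultaneously, for every `(i, j)` in the round, row `j` is replaced by
`row j + row i`. -/
def applyRound {m : ℕ} (R : Finset (Fin m × Fin m))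
    (M : Matrix (Fin m) (Fin m) (ZMod 2)) : Matrix (Fin m) (Fin m) (ZMod 2) :=
  Matrix.of fun r c => M r c + ∑ p ∈ R.filter (fun p => p.2 = r), M p.1 c

namespace ParElim

variable {m : ℕ}

/-- The round eliminating the anti-diagonal `i + j = s`: pairs `(j, i)`
("add row `j` to row `i`") with `i < j`, `i + j = s`, and current entry
`M i j = 1`. -/
def roundSet (s : ℕ) (M : Matrix (Fin m) (Fin m) (ZMod 2)) :
    Finset (Fin m × Fin m) :=
  Finset.univ.filter
    (fun p => ((p.2 : ℕ) + (p.1 : ℕ) = s ∧ p.2 < p.1 ∧ M p.2 p.1 = 1))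

/-- Targets of the round with given target row `r`, as a set of source rows. -/
def J (s : ℕ) (M : Matrix (Fin m) (Fin m) (ZMod 2)) (r : Fin m) :
    Finset (Fin m) :=
  Finset.univ.filter (fun j => ((r : ℕ) + (j : ℕ) = s ∧ r < j ∧ M r j = 1))

lemma J_subsingleton (s : ℕ) (M : Matrix (Fin m) (Fin m) (ZMod 2)) (r : Fin m)
    {j₁ j₂ : Fin m} (h₁ : j₁ ∈ J s M r) (h₂ : j₂ ∈ J s M r) : j₁ = j₂ := by
  simp only [J, Finset.mem_filter] at h₁ h₂
  exact Fin.ext (by omega)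

lemma mem_J_iff (s : ℕ) (M : Matrix (Fin m) (Fin m) (ZMod 2)) (r j : Fin m) :
    j ∈ J s M r ↔ ((r : ℕ) + (j : ℕ) = s ∧ r < j ∧ M r j = 1) := by
  simp [J]

lemma filter_roundSet (s : ℕ) (M : Matrix (Fin m) (Fin m) (ZMod 2)) (r : Fin m) :
    (roundSet s M).filter (fun p => p.2 = r) =
      (J s M r).image (fun j => (j, r)) := by
  ext ⟨a, b⟩
  simp only [roundSet, J, Finset.mem_filter, Finset.mem_image, Finset.mem_univ,
    true_and, Prod.mk.injEq]
  constructor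
  · rintro ⟨⟨h1, h2, h3⟩, rfl⟩
    exact ⟨a, ⟨h1, h2, h3⟩, rfl, rfl⟩
  · rintro ⟨j, ⟨h1, h2, h3⟩, rfl, rfl⟩
    exact ⟨⟨h1, h2, h3⟩, rfl⟩

lemma applyRound_roundSet (s : ℕ) (M : Matrix (Fin m) (Fin m) (ZMod 2))
    (r c : Fin m) :
    applyRound (roundSet s M) M r c = M r c + ∑ j ∈ J s M r, M j c := by
  unfold applyRound
  rw [Matrix.of_apply, filter_roundSet,
    Finset.sum_image (by intro x _ y _ h; exact (Prod.mk.injEq _ _ _ _).mp h |>.1)]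

lemma valid_roundSet (s : ℕ) (M : Matrix (Fin m) (Fin m) (ZMod 2)) :
    ValidRound (roundSet s M) := by
  constructor
  · rintro ⟨a, b⟩ hp
    simp only [roundSet, Finset.mem_filter] at hp
    exact fun h => absurd h.symm (ne_of_lt hp.2.2.1)
  · rintro ⟨a, b⟩ hp ⟨a', b'⟩ hq hne
    simp only [roundSet, Finset.mem_filter] at hp hq
    obtain ⟨h1, h2, -⟩ := hp.2
    obtain ⟨h1', h2', -⟩ := hq.2
    simp only [Prod.mk.injEq, not_and] at hne ⊢
    have hab : (a : ℕ) ≠ (a' : ℕ) ∨ (b : ℕ) ≠ (b' : ℕ) := by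
      by_contra h
      push_neg at h
      exact hne (Prod.ext (Fin.ext h.1) (Fin.ext h.2))
    have hb : b < a := h2
    have hb' : b' < a' := h2'
    refine ⟨?_, ?_, ?_, ?_⟩ <;> intro h <;>
      (try subst h) <;> simp only [Fin.lt_def] at hb hb' <;>
      first
      | omega
      | (apply_fun (Fin.val) at h; omega)

/-- The invariant after processing anti-diagonals `≤ s`. -/
def Inv (s : ℕ) (M : Matrix (Fin m) (Fin m) (ZMod 2)) : Prop :=
  (∀ i, M i i = 1) ∧ (∀ i j : Fin m, j < i → M i j = 0) ∧
    (∀ i j : Fin m, i < j → (i : ℕ) + (j : ℕ) ≤ s → M i j = 0)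

lemma inv_step {s : ℕ} {M : Matrix (Fin m) (Fin m) (ZMod 2)} (h : Inv s M) :
    Inv (s + 1) (applyRound (roundSet (s + 1) M) M) := by
  obtain ⟨hd, hl, hu⟩ := h
  have hsum : ∀ r c : Fin m, ((c : ℕ) < (s + 1) - (r : ℕ) ∨ J (s+1) M r = ∅) →
      ∑ j ∈ J (s+1) M r, M j c = 0 := by
    intro r c hc
    rcases Finset.eq_empty_or_nonempty (J (s+1) M r) with he | ⟨j, hj⟩
    · simp [he]
    · rcases hc with hc | he
      · have hJ : J (s+1) M r = {j} := by
          apply Finset.eq_singleton_iff_unique_mem.mpr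
          exact ⟨hj, fun x hx => J_subsingleton _ _ _ hx hj⟩
        rw [hJ, Finset.sum_singleton]
        rw [mem_J_iff] at hj
        apply hl
        rw [Fin.lt_def]; omega
      · simp [he]
  refine ⟨?_, ?_, ?_⟩
  · intro i
    rw [applyRound_roundSet, hd, hsum i i ?_, add_zero]
    rcases Finset.eq_empty_or_nonempty (J (s+1) M i) with he | ⟨j, hj⟩
    · right; exact he
    · left; rw [mem_J_iff] at hj; omega
  · intro i j hji
    rw [applyRound_roundSet, hl i j hji, hsum i j ?_, add_zero]
    rcases Finset.eq_empty_or_nonempty (J (s+1) M i) with he | ⟨j', hj'⟩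
    · right; exact he
    · left; rw [mem_J_iff] at hj'; rw [Fin.lt_def] at hji; omega
  · intro i j hij hle
    rw [applyRound_roundSet]
    rcases lt_or_eq_of_le hle with hlt | heq
    · rw [hu i j hij (by omega), hsum i j (Or.inl (by omega)), add_zero]
    · -- i + j = s + 1
      by_cases h1 : M i j = 1
      · have hj : j ∈ J (s+1) M i := (mem_J_iff _ _ _ _).mpr ⟨heq, hij, h1⟩
        have hJ : J (s+1) M i = {j} :=
          Finset.eq_singleton_iff_unique_mem.mpr
            ⟨hj, fun x hx => J_subsingleton _ _ _ hx hj⟩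
        rw [hJ, Finset.sum_singleton, h1, hd]
        decide
      · have hJ : J (s+1) M i = ∅ := by
          apply Finset.eq_empty_iff_forall_notMem.mpr
          intro x hx
          rw [mem_J_iff] at hx
          have : x = j := Fin.ext (by omega)
          exact h1 (this ▸ hx.2.2)
        have h0 : M i j = 0 := by
          have hall : ∀ x : ZMod 2, x ≠ 1 → x = 0 := by decide
          exact hall _ h1
        rw [h0, hJ, Finset.sum_empty, add_zero]

/-- The sequence of matrices. -/
def seqM (U : Matrix (Fin m) (Fin m) (ZMod 2)) : ℕ → Matrix (Fin m) (Fin m) (ZMod 2)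
  | 0 => U
  | s + 1 => applyRound (roundSet (s + 1) (seqM U s)) (seqM U s)

/-- The sequence of rounds. -/
def seqL (U : Matrix (Fin m) (Fin m) (ZMod 2)) : ℕ → List (Finset (Fin m × Fin m))
  | 0 => []
  | s + 1 => seqL U s ++ [roundSet (s + 1) (seqM U s)]

lemma seqL_length (U : Matrix (Fin m) (Fin m) (ZMod 2)) (s : ℕ) :
    (seqL U s).length = s := by
  induction s with
  | zero => rfl
  | succ s ih => simp [seqL, ih]

lemma seqL_foldl (U : Matrix (Fin m) (Fin m) (ZMod 2)) (s : ℕ) :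
    (seqL U s).foldl (fun M R => applyRound R M) U = seqM U s := by
  induction s with
  | zero => rfl
  | succ s ih => simp [seqL, seqM, List.foldl_append, ih]

lemma seqL_valid (U : Matrix (Fin m) (Fin m) (ZMod 2)) (s : ℕ) :
    ∀ R ∈ seqL U s, ValidRound R := by
  induction s with
  | zero => simp [seqL]
  | succ s ih =>
    intro R hR
    simp only [seqL, List.mem_append, List.mem_singleton] at hR
    rcases hR with hR | rfl
    · exact ih R hR
    · exact valid_roundSet _ _

lemma seqM_inv (U : Matrix (Fin m) (Fin m) (ZMod 2))
    (hdiag : ∀ i, U i i = 1) (hlow : ∀ i j : Fin m, j < i → U i j = 0) (s : ℕ) :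
    Inv s (seqM U s) := by
  induction s with
  | zero =>
    refine ⟨hdiag, hlow, ?_⟩
    intro i j hij hle
    rw [Fin.lt_def] at hij; omega
  | succ s ih => exact inv_step ih

end ParElim

/-- Every `m × m` unit upper-triangular matrix over `𝔽₂` can
be transformed into the identity by a sequence of at most `2m` parallel rounds
of row additions. -/
theorem unit_upper_triangular_parallel_elimination
    (m : ℕ) (hm : 1 ≤ m) (U : Matrix (Fin m) (Fin m) (ZMod 2))
    (hdiag : ∀ i, U i i = 1)
    (hlow : ∀ i j : Fin m, j < i → U i j = 0) :
    ∃ L : List (Finset (Fin m × Fin m)),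
      L.length ≤ 2 * m ∧
      (∀ R ∈ L, ValidRound R) ∧
      L.foldl (fun M R => applyRound R M) U = 1 := by
  refine ⟨ParElim.seqL U (2 * m), by rw [ParElim.seqL_length],
    ParElim.seqL_valid U (2 * m), ?_⟩
  rw [ParElim.seqL_foldl]
  obtain ⟨hd, hl, hu⟩ := ParElim.seqM_inv U hdiag hlow (2 * m)
  ext i j
  rcases lt_trichotomy i j with h | rfl | h
  · rw [hu i j h (by omega), Matrix.one_apply_ne (ne_of_lt h)]
  · rw [hd, Matrix.one_apply_eq]
  · rw [hl i j h, Matrix.one_apply_ne (ne_of_gt h)]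
end

section
/- Let 1 ≤ s ≤ n and let S ⊆ 𝔽₂ⁿ be any set of exactly s pairwise distinct vectors. Then there exists a bijection f : 𝔽₂ⁿ → 𝔽₂ⁿ that is a finite composition of maps of the following three forms — NOT maps x ↦ x + e_i; CNOT maps x ↦ x + x_i·e_j with i ≠ j; and Toffoli maps x ↦ x + x_i·x_j·e_k with i, j, k pairwise distinct — such that f maps the set {e_1, …, e_s} of the first s standard basis vectors onto S, and such that the composition uses at most s maps of the Toffoli form. -/
/-- A classical reversible gate on `n` bits: a NOT (X), a CNOT (CX), or a
Toffoli (CCX) gate. -/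
inductive RevGate (n : ℕ) where
  | X (i : Fin n)
  | CX (i j : Fin n)
  | CCX (i j k : Fin n)

/-- Validity of a gate: the control/target indices must be pairwise
distinct. -/
def RevGate.Valid {n : ℕ} : RevGate n → Prop
  | .X _ => True
  | .CX i j => i ≠ j
  | .CCX i j k => i ≠ j ∧ i ≠ k ∧ j ≠ k

/-- The action of a gate on `𝔽₂ⁿ`: `X i` maps `x ↦ x + e_i`, `CX i j` maps
`x ↦ x + x_i · e_j`, and `CCX i j k` maps `x ↦ x + x_i · x_j · e_k`. -/
def RevGate.apply {n : ℕ} : RevGate n → (Fin n → ZMod 2) → (Fin n → ZMod 2)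
  | .X i, x => x + Pi.single i 1
  | .CX i j, x => x + Pi.single j (x i)
  | .CCX i j k, x => x + Pi.single k (x i * x j)

/-- Whether a gate is a Toffoli gate. -/
def RevGate.isCCX {n : ℕ} : RevGate n → Bool
  | .CCX _ _ _ => true
  | _ => false

/-! Induction on `s`. If a circuit `f` sends `e_1, …, e_{s-1}` onto `S` minus a point `v`,
it suffices to run first a circuit fixing `e_1, …, e_{s-1}` and sending `e_s` to `w := f⁻¹ v`,
which is none of them. That costs at most one Toffoli gate. If `w` has a one in a coordinate
`k ≥ s`, a CNOT from `s` into `k` (none if `k = s`) and a fan-out from `k` suffice; if `w = 0`,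
a NOT on `s` followed by the parity of the first `s - 1` coordinates into `s`; otherwise `w` has
ones at two coordinates `i ≠ j < s`, and after fanning `w` out from `s` the gate `CCX i j s`
clears the `s`-th coordinate of `e_s + w` while fixing every `e_l` with `l < s`. -/

namespace RevGate

variable {n : ℕ}

theorem add_single_apply_of_ne {x : Fin n → ZMod 2} {i j : Fin n} (hij : i ≠ j) (a : ZMod 2) :
    (x + Pi.single j a : Fin n → ZMod 2) i = x i := by
  rw [Pi.add_apply, Pi.single_eq_of_ne hij, add_zero]

theorem pi_add_self_eq_zero (x : Fin n → ZMod 2) : x + x = 0 :=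
  funext fun i => CharTwo.add_self_eq_zero (x i)

theorem add_single_add_single (x : Fin n → ZMod 2) (j : Fin n) (a : ZMod 2) :
    x + Pi.single j a + Pi.single j a = x := by
  rw [add_assoc, pi_add_self_eq_zero, add_zero]

theorem apply_involutive {g : RevGate n} (hg : g.Valid) : Function.Involutive g.apply := by
  intro x
  cases g with
  | X i => exact add_single_add_single x i 1
  | CX i j =>
    simp only [apply, add_single_apply_of_ne (show i ≠ j from hg)]
    exact add_single_add_single x j (x i)
  | CCX i j k =>
    obtain ⟨-, hik, hjk⟩ := hg
    simp only [apply, add_single_apply_of_ne hik, add_single_apply_of_ne hjk]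
    exact add_single_add_single x k (x i * x j)

def Realizable (k : ℕ) (f : (Fin n → ZMod 2) → Fin n → ZMod 2) : Prop :=
  ∃ L : List (RevGate n), (∀ g ∈ L, g.Valid) ∧ L.countP (fun g => g.isCCX) ≤ k ∧
    (fun x => L.foldl (fun y g => g.apply y) x) = f

namespace Realizable

variable {k l : ℕ} {f g : (Fin n → ZMod 2) → Fin n → ZMod 2}

theorem id : Realizable (n := n) 0 id :=
  ⟨[], by simp, by simp, rfl⟩

theorem mono (hf : Realizable k f) (hkl : k ≤ l) : Realizable l f :=
  let ⟨L, hvalid, hcount, hL⟩ := hf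
  ⟨L, hvalid, hcount.trans hkl, hL⟩

theorem comp (hg : Realizable l g) (hf : Realizable k f) : Realizable (k + l) (g ∘ f) := by
  obtain ⟨L, hLvalid, hLcount, rfl⟩ := hf
  obtain ⟨M, hMvalid, hMcount, rfl⟩ := hg
  refine ⟨L ++ M, ?_, ?_, ?_⟩
  · simpa [or_imp, forall_and] using ⟨hLvalid, hMvalid⟩
  · rw [List.countP_append]
    exact Nat.add_le_add hLcount hMcount
  · funext x
    simp [List.foldl_append]

theorem bijective (hf : Realizable k f) : f.Bijective := by
  obtain ⟨L, hvalid, -, rfl⟩ := hf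
  induction L with
  | nil => exact Function.bijective_id
  | cons g L ih =>
    simp only [List.mem_cons, forall_eq_or_imp] at hvalid
    exact (ih hvalid.2).comp (apply_involutive hvalid.1).bijective

end Realizable

theorem realizable_X (i : Fin n) : Realizable 0 (apply (.X i)) :=
  ⟨[.X i], by simp [Valid], le_of_eq rfl, rfl⟩

theorem realizable_CX {i j : Fin n} (hij : i ≠ j) : Realizable 0 (apply (.CX i j)) :=
  ⟨[.CX i j], by simpa [Valid], le_of_eq rfl, rfl⟩

theorem realizable_CCX {i j k : Fin n} (h : (CCX i j k).Valid) :
    Realizable 1 (apply (.CCX i j k)) :=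
  ⟨[.CCX i j k], by simpa, le_of_eq rfl, rfl⟩

theorem realizable_add_single_mul {i j : Fin n} (hij : i ≠ j) (a : ZMod 2) :
    Realizable 0 (fun x => x + Pi.single j (x i * a)) := by
  obtain rfl | rfl : a = 0 ∨ a = 1 := by revert a; decide
  · simp only [mul_zero, Pi.single_zero, add_zero]
    exact Realizable.id
  · simp only [mul_one]
    exact realizable_CX hij

theorem realizable_fanout (i : Fin n) {v : Fin n → ZMod 2} (hv : v i = 0) :
    Realizable 0 (fun x => x + x i • v) := by
  have partial_sums : ∀ T : Finset (Fin n), i ∉ T →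
      Realizable 0 (fun x => x + ∑ j ∈ T, Pi.single j (x i * v j)) := by
    intro T
    induction T using Finset.induction_on with
    | empty =>
      intro _
      simp only [Finset.sum_empty, add_zero]
      exact Realizable.id
    | insert j T hjT ih =>
      intro hi
      rw [Finset.mem_insert, not_or] at hi
      convert (realizable_add_single_mul hi.1 (v j)).comp (ih hi.2) using 1
      funext x
      have hxi : (x + ∑ j ∈ T, Pi.single j (x i * v j)) i = x i := by
        simp [Finset.sum_apply, Pi.single_apply, hi.2]
      simp only [Function.comp_apply, hxi, Finset.sum_insert hjT]
      abel
  convert partial_sums _ (Finset.notMem_erase i Finset.univ) using 1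
  funext x
  rw [Finset.sum_erase _ (by simp [hv])]
  conv_lhs => rw [← Finset.univ_sum_single (x i • v)]
  rfl

theorem realizable_transvection (T : Finset (Fin n)) {v : Fin n → ZMod 2}
    (hv : ∀ i ∈ T, v i = 0) : Realizable 0 (fun x => x + (∑ i ∈ T, x i) • v) := by
  induction T using Finset.induction_on with
  | empty =>
    simp only [Finset.sum_empty, zero_smul, add_zero]
    exact Realizable.id
  | insert j T hjT ih =>
    simp only [Finset.mem_insert, forall_eq_or_imp] at hv
    convert (realizable_fanout j hv.1).comp (ih hv.2) using 1
    funext x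
    have hxj : (x + (∑ i ∈ T, x i) • v) j = x j := by simp [hv.1]
    simp only [Function.comp_apply, hxj, Finset.sum_insert hjT, add_smul]
    abel

section MoveSingle

variable {F : Finset (Fin n)} {t : Fin n} {w : Fin n → ZMod 2}

theorem single_apply_of_mem_of_notMem {i k : Fin n} (hi : i ∈ F) (hk : k ∉ F) :
    (Pi.single i 1 : Fin n → ZMod 2) k = 0 :=
  Pi.single_eq_of_ne (ne_of_mem_of_not_mem hi hk).symm 1

theorem exists_realizable_apply_eq_of_apply_eq_one {k : Fin n} {u : Fin n → ZMod 2}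
    (hu : u k = 1) (hw : w k = 1) :
    ∃ f, Realizable 0 f ∧ f u = w ∧ ∀ x, x k = 0 → f x = x := by
  refine ⟨_, realizable_fanout k (v := w + u) (by simp [hu, hw, CharTwo.add_self_eq_zero]),
    ?_, fun x hx => by simp [hx]⟩
  simp only [hu, one_smul]
  rw [add_comm w u, ← add_assoc, pi_add_self_eq_zero, zero_add]

theorem exists_realizable_fix_singles_of_apply_eq_one (ht : t ∉ F) {k : Fin n} (hk : k ∉ F)
    (hwk : w k = 1) :
    ∃ f, Realizable 0 f ∧ (∀ i ∈ F, f (Pi.single i 1) = Pi.single i 1) ∧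
      f (Pi.single t 1) = w := by
  by_cases hkt : k = t
  · subst hkt
    obtain ⟨f, hf, hft, hfix⟩ := exists_realizable_apply_eq_of_apply_eq_one
      (u := Pi.single k 1) (by simp) hwk
    exact ⟨f, hf, fun i hi => hfix _ (single_apply_of_mem_of_notMem hi ht), hft⟩
  · obtain ⟨f, hf, hft, hfix⟩ := exists_realizable_apply_eq_of_apply_eq_one
      (u := Pi.single t 1 + Pi.single k 1) (by simp [Pi.single_eq_of_ne hkt]) hwk
    refine ⟨f ∘ apply (.CX t k), (hf.comp (realizable_CX (Ne.symm hkt))), fun i hi => ?_, ?_⟩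
    · simp only [Function.comp_apply, apply, single_apply_of_mem_of_notMem hi ht, Pi.single_zero,
        add_zero]
      exact hfix _ (single_apply_of_mem_of_notMem hi hk)
    · simpa [apply] using hft

theorem exists_realizable_fix_singles_to_zero (ht : t ∉ F) :
    ∃ f, Realizable 0 f ∧ (∀ i ∈ F, f (Pi.single i 1) = Pi.single i 1) ∧
      f (Pi.single t 1) = 0 := by
  have hvF : ∀ i ∈ F, (Pi.single t 1 : Fin n → ZMod 2) i = 0 :=
    fun i hi => Pi.single_eq_of_ne (ne_of_mem_of_not_mem hi ht) 1
  refine ⟨_ ∘ apply (.X t), (realizable_transvection F hvF).comp (realizable_X t), ?_, ?_⟩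
  · intro i hi
    have hsum : ∑ j ∈ F, (Pi.single i 1 + Pi.single t 1 : Fin n → ZMod 2) j = 1 := by
      simp only [Pi.add_apply]
      rw [Finset.sum_add_distrib, Finset.sum_eq_zero hvF, add_zero]
      simp [Pi.single_apply, hi]
    simp only [Function.comp_apply, apply, hsum, one_smul]
    exact add_single_add_single _ t 1
  · simp only [Function.comp_apply, apply, pi_add_self_eq_zero, Pi.zero_apply,
      Finset.sum_const_zero, zero_smul, add_zero]

theorem exists_realizable_fix_singles_of_two_apply_eq_one (ht : t ∉ F) (hwt : w t = 0)
    {i j : Fin n} (hi : i ∈ F) (hj : j ∈ F) (hij : i ≠ j) (hwi : w i = 1) (hwj : w j = 1) :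
    ∃ f, Realizable 1 f ∧ (∀ i ∈ F, f (Pi.single i 1) = Pi.single i 1) ∧
      f (Pi.single t 1) = w := by
  have hit : i ≠ t := ne_of_mem_of_not_mem hi ht
  have hjt : j ≠ t := ne_of_mem_of_not_mem hj ht
  refine ⟨apply (.CCX i j t) ∘ _,
    (realizable_CCX ⟨hij, hit, hjt⟩).comp (realizable_fanout t hwt), fun l hl => ?_, ?_⟩
  · have hlij :
        (Pi.single l 1 : Fin n → ZMod 2) i * (Pi.single l 1 : Fin n → ZMod 2) j = 0 := by
      by_cases hli : l = i
      · simp [hli, Pi.single_eq_of_ne (Ne.symm hij)]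
      · simp [Pi.single_eq_of_ne (Ne.symm hli)]
    simp [apply, single_apply_of_mem_of_notMem hl ht, hlij]
  · simp only [Function.comp_apply, apply, Pi.single_eq_same, one_smul,
      Pi.add_apply, Pi.single_eq_of_ne hit, Pi.single_eq_of_ne hjt, hwi, hwj]
    rw [zero_add, mul_one, add_comm _ w, add_single_add_single]

theorem exists_realizable_fix_singles_map_single (ht : t ∉ F)
    (hw : ∀ i ∈ F, w ≠ Pi.single i 1) :
    ∃ f, Realizable 1 f ∧ (∀ i ∈ F, f (Pi.single i 1) = Pi.single i 1) ∧
      f (Pi.single t 1) = w := by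
  have eq_one_of_ne_zero : ∀ a : ZMod 2, a ≠ 0 → a = 1 := by decide
  by_cases hout : ∃ k ∉ F, w k = 1
  · obtain ⟨k, hk, hwk⟩ := hout
    obtain ⟨f, hf, hfw⟩ := exists_realizable_fix_singles_of_apply_eq_one ht hk hwk
    exact ⟨f, hf.mono zero_le_one, hfw⟩
  have hsupp : ∀ k ∉ F, w k = 0 := fun k hk =>
    by_contra fun h => hout ⟨k, hk, eq_one_of_ne_zero _ h⟩
  by_cases hw0 : w = 0
  · subst hw0
    obtain ⟨f, hf, hfw⟩ := exists_realizable_fix_singles_to_zero ht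
    exact ⟨f, hf.mono zero_le_one, hfw⟩
  obtain ⟨i, hwi⟩ := Function.ne_iff.1 hw0
  have hi : i ∈ F := by_contra fun h => hwi (hsupp i h)
  have hwi : w i = 1 := eq_one_of_ne_zero _ hwi
  obtain ⟨j, hwj⟩ := Function.ne_iff.1 (hw i hi)
  have hji : j ≠ i := by
    rintro rfl
    simp [hwi] at hwj
  have hwj : w j = 1 := eq_one_of_ne_zero _ (by simpa [Pi.single_eq_of_ne hji] using hwj)
  have hj : j ∈ F := by_contra fun h => one_ne_zero (hwj.symm.trans (hsupp j h))
  exact exists_realizable_fix_singles_of_two_apply_eq_one ht (hsupp t ht) hi hj hji.symm hwi hwj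

end MoveSingle

theorem exists_realizable_image_singles (F : Finset (Fin n)) (S : Finset (Fin n → ZMod 2))
    (hS : S.card = F.card) :
    ∃ f, Realizable F.card f ∧ (F.image fun i => Pi.single i 1).image f = S := by
  induction F using Finset.induction_on generalizing S with
  | empty =>
    rw [Finset.card_empty, Finset.card_eq_zero] at hS
    exact ⟨_, Realizable.id, by simp [hS]⟩
  | insert t F ht ih =>
    rw [Finset.card_insert_of_notMem ht] at hS
    obtain ⟨v, hv⟩ : S.Nonempty := Finset.card_pos.1 (by omega)
    obtain ⟨f, hf, hfS⟩ := ih (S.erase v) (by simp [Finset.card_erase_of_mem hv, hS])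
    obtain ⟨w, rfl⟩ := hf.bijective.surjective v
    have hw : ∀ i ∈ F, w ≠ Pi.single i 1 := by
      rintro i hi rfl
      have hmem :=
        Finset.mem_image_of_mem f (Finset.mem_image_of_mem (fun i => Pi.single i 1) hi)
      rw [hfS] at hmem
      exact Finset.notMem_erase _ S hmem
    obtain ⟨g, hg, hgF, hgt⟩ := exists_realizable_fix_singles_map_single ht hw
    have hfg : (F.image fun i => Pi.single i 1).image (f ∘ g) =
        (F.image fun i => Pi.single i 1).image f := by
      refine Finset.image_congr fun x hx => ?_
      obtain ⟨i, hi, rfl⟩ := Finset.mem_image.1 hx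
      exact congrArg f (hgF i hi)
    have hcard : 1 + F.card = (insert t F).card := by
      rw [Finset.card_insert_of_notMem ht, Nat.add_comm]
    refine ⟨f ∘ g, hcard ▸ hf.comp hg, ?_⟩
    rw [Finset.image_insert, Finset.image_insert, hfg, hfS, Function.comp_apply, hgt,
      Finset.insert_erase hv]

end RevGate

theorem sparse_reversible_synthesis_general
    (n s : ℕ) (hsn : s ≤ n)
    (S : Finset (Fin n → ZMod 2)) (hS : S.card = s) :
    ∃ L : List (RevGate n),
      (∀ g ∈ L, g.Valid) ∧
      L.countP (fun g => g.isCCX) ≤ s ∧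
      Function.Bijective (fun x : Fin n → ZMod 2 =>
        L.foldl (fun y g => g.apply y) x) ∧
      Finset.image (fun x : Fin n → ZMod 2 => L.foldl (fun y g => g.apply y) x)
        (Finset.image
          (fun i : Fin s => Pi.single (Fin.castLE hsn i) (1 : ZMod 2))
          Finset.univ)
        = S := by
  obtain ⟨f, hf, himage⟩ := RevGate.exists_realizable_image_singles
    (Finset.univ.map (Fin.castLEEmb hsn)) S (by simp [hS])
  have hbij := hf.bijective
  obtain ⟨L, hvalid, hcount, rfl⟩ := hf
  refine ⟨L, hvalid, by simpa using hcount, hbij, ?_⟩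
  rw [← himage]
  congr 1
  rw [Finset.map_eq_image, Finset.image_image]
  rfl

/-- For `1 ≤ s ≤ n` and any set `S ⊆ 𝔽₂ⁿ` of exactly `s`
distinct vectors, there is a bijection of `𝔽₂ⁿ` given by a finite composition
of NOT, CNOT and Toffoli maps, using at most `s` Toffoli maps, that sends
`{e_1, …, e_s}` onto `S`. -/
theorem sparse_reversible_synthesis
    (n s : ℕ) (hs : 1 ≤ s) (hsn : s ≤ n)
    (S : Finset (Fin n → ZMod 2)) (hS : S.card = s) :
    ∃ L : List (RevGate n),
      (∀ g ∈ L, g.Valid) ∧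
      L.countP (fun g => g.isCCX) ≤ s ∧
      Function.Bijective (fun x : Fin n → ZMod 2 =>
        L.foldl (fun y g => g.apply y) x) ∧
      Finset.image (fun x : Fin n → ZMod 2 => L.foldl (fun y g => g.apply y) x)
        (Finset.image
          (fun i : Fin s => Pi.single (Fin.castLE hsn i) (1 : ZMod 2))
          Finset.univ)
        = S :=
  sparse_reversible_synthesis_general n s hsn S hS
end
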